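/- arXiv:1910.06798 — 7 statements merged into one kernel-verified Lean document; each statement's English description precedes it below -/
import Mathlib

section
/- If u : ℝ → ℝ is the value function of some two-player zero-sum polynomial game, then u is continuous and piecewise rational. -/
open Polynomial

/-- The value of a finite two-player zero-sum matrix game with payoff matrix `G`:
`sup` over mixed strategies of Player 1 of `inf` over mixed strategies of Player 2
of the expected payoff. -/
noncomputable def matrixValue {A B : Type} [Fintype A] [Fintype B] (G : A → B → ℝ) : ℝ :=
  ⨆ x : stdSimplex ℝ A, ⨅ y : stdSimplex ℝ B, ∑ a : A, ∑ b : B, x.1 a * G a b * y.1 b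

/-- `u ∈ 𝒱`: `u` is the value function of some two-player zero-sum polynomial game,
i.e. there are finite nonempty strategy sets `A`, `B` and a matrix `G` of real polynomials
such that `u z` is the value of the matrix game `G` evaluated at `z`, for every `z`. -/
def InV (u : ℝ → ℝ) : Prop :=
  ∃ (A B : Type) (iA : Fintype A) (iB : Fintype B), Nonempty A ∧ Nonempty B ∧
    ∃ G : A → B → Polynomial ℝ,
      ∀ z : ℝ, u z = @matrixValue A B iA iB fun a b => (G a b).eval z

/-- `u` is piecewise rational: there are `K + 2` points
`⊥ = h 0 < h 1 < ⋯ < h (K+1) = ⊤` (the interior ones being real) and rational functions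
`Q k / R k` with `R k` nonvanishing on `(h k, h (k+1))`, such that `u = Q k / R k` there. -/
def PiecewiseRational (u : ℝ → ℝ) : Prop :=
  ∃ (K : ℕ) (h : Fin (K + 2) → EReal) (Q R : Fin (K + 1) → Polynomial ℝ),
    StrictMono h ∧ h 0 = ⊥ ∧ h (Fin.last (K + 1)) = ⊤ ∧
    ∀ (k : Fin (K + 1)) (z : ℝ), h k.castSucc < (z : EReal) → (z : EReal) < h k.succ →
      (R k).eval z ≠ 0 ∧ u z = (Q k).eval z / (R k).eval z

/-!
The value of `G(z)` is the supremum, over the compact simplex of mixed strategies `x` of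
Player 1, of the payoff `min_b ∑ a, x a * G a b (z)` that `x` guarantees; this is jointly
continuous in `(z, x)`, so the value is continuous in `z`.

The value is also the optimum of the linear program "maximise `v` subject to `x ∈ Δ(A)` and
`v ≤ ∑ a, x a * G a b (z)` for all `b`". Among its optimal solutions, one of largest Euclidean
norm is a vertex of the feasible polyhedron, hence the unique solution of a square subsystem of
tight constraints, and Cramer's rule writes `v` as a quotient of two determinants of polynomial
matrices taken from a finite family that does not depend on `z`. Away from the finitely many
zeros of the nonzero denominators `D i` and of the nonzero cross-differences
`N i * D j - N j * D i`, two quotients agree either everywhere or nowhere on an interval, so the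
continuous value function follows a single quotient on each such interval.
-/

open Filter Topology Matrix

theorem IsPreconnected.exists_subset_of_closed_cover {X ι : Type*} [TopologicalSpace X]
    [Finite ι] {s : Set X} (hs : IsPreconnected s) (hne : s.Nonempty) {F : ι → Set X}
    (hF : ∀ i, IsClosed (F i)) (hcov : s ⊆ ⋃ i, F i)
    (hlink : ∀ i j, (s ∩ F i ∩ F j).Nonempty → s ∩ F j ⊆ F i) : ∃ i, s ⊆ F i := by
  obtain ⟨z₀, hz₀⟩ := hne
  obtain ⟨i, hz₀i⟩ := Set.mem_iUnion.1 (hcov hz₀)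
  set V := ⋃ j ∈ {j | s ∩ F i ∩ F j = ∅}, F j
  have hV : IsClosed V := (Set.toFinite _).isClosed_biUnion fun j _ => hF j
  have hnotV : ∀ z ∈ s ∩ F i, z ∉ V := fun z hz hzV => by
    obtain ⟨j, hj, hzj⟩ := Set.mem_iUnion₂.1 hzV
    exact Set.eq_empty_iff_forall_notMem.1 hj z ⟨hz, hzj⟩
  refine ⟨i, (isPreconnected_iff_subset_of_disjoint_closed.1 hs _ _ (hF i) hV ?_ ?_).resolve_right
    fun hsV => hnotV z₀ ⟨hz₀, hz₀i⟩ (hsV hz₀)⟩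
  · intro z hz
    obtain ⟨j, hzj⟩ := Set.mem_iUnion.1 (hcov hz)
    by_cases hij : (s ∩ F i ∩ F j).Nonempty
    · exact Or.inl (hlink i j hij ⟨hz, hzj⟩)
    · exact Or.inr (Set.mem_biUnion (Set.not_nonempty_iff_eq_empty.1 hij) hzj)
  · exact Set.eq_empty_iff_forall_notMem.2 fun z ⟨hz, hzi, hzV⟩ => hnotV z ⟨hz, hzi⟩ hzV

theorem Polynomial.exists_finset_forall_eval_ne_zero {R κ : Type*} [CommRing R] [IsDomain R]
    [Finite κ] (p : κ → R[X]) : ∃ s : Finset R, ∀ k, p k ≠ 0 → ∀ z ∉ s, (p k).eval z ≠ 0 := by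
  classical
  have := Fintype.ofFinite κ
  refine ⟨Finset.univ.biUnion fun k => (p k).roots.toFinset, fun k hk z hz hzero => hz ?_⟩
  exact Finset.mem_biUnion.2
    ⟨k, Finset.mem_univ k, Multiset.mem_toFinset.2 ((mem_roots hk).2 hzero)⟩

theorem piecewiseRational_of_forall_isPreconnected_disjoint {u : ℝ → ℝ} (s : Finset ℝ)
    (hrat : ∀ I : Set ℝ, IsPreconnected I → Disjoint I s →
      ∃ Q R : ℝ[X], ∀ z ∈ I, R.eval z ≠ 0 ∧ u z = Q.eval z / R.eval z) :
    PiecewiseRational u := by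
  set g := s.orderEmbOfFin rfl
  set h : Fin (s.card + 2) → EReal := Fin.cons ⊥ (Fin.snoc (fun i => (g i : EReal)) ⊤)
  have hmono : StrictMono h := by
    refine Fin.strictMono_cons.2 ⟨fun j => ?_, ?_⟩
    · induction j using Fin.lastCases <;> simp [EReal.bot_lt_coe]
    · rw [← Fin.insertNth_last', Fin.strictMono_insertNth_iff]
      exact ⟨fun i j hij => EReal.coe_lt_coe_iff.2 (g.strictMono hij),
        fun i _ => EReal.coe_lt_top _, fun i hi => absurd hi (Fin.castSucc_lt_last i).not_ge⟩
  have hg : ∀ i, h i.castSucc.succ = g i := fun i => by simp [h]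
  set I : Fin (s.card + 1) → Set ℝ := fun k => {z | h k.castSucc < z ∧ (z : EReal) < h k.succ}
  have hIconn : ∀ k, IsPreconnected (I k) := fun k =>
    Set.OrdConnected.isPreconnected ⟨fun _ hx _ hy _ hz =>
      ⟨hx.1.trans_le (EReal.coe_le_coe_iff.2 hz.1), (EReal.coe_le_coe_iff.2 hz.2).trans_lt hy.2⟩⟩
  have hIs : ∀ k, Disjoint (I k) s := by
    refine fun k => Set.disjoint_left.2 fun z hz hzs => ?_
    obtain ⟨i, rfl⟩ : z ∈ Set.range g := by rwa [Finset.range_orderEmbOfFin]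
    have h₁ := hmono.lt_iff_lt.1 (hz.1.trans_eq (hg i).symm)
    have h₂ := hmono.lt_iff_lt.1 ((hg i).trans_lt hz.2)
    simp only [Fin.lt_def, Fin.val_succ, Fin.val_castSucc] at h₁ h₂
    omega
  choose Q R hQR using fun k => hrat (I k) (hIconn k) (hIs k)
  refine ⟨s.card, h, Q, R, hmono, rfl, ?_, fun k z h₁ h₂ => hQR k z ⟨h₁, h₂⟩⟩
  simp [h, ← Fin.succ_last]

theorem exists_eq_div_on_of_isPreconnected {ι : Type*} [Finite ι] {u : ℝ → ℝ}
    (hu : Continuous u) (N D : ι → ℝ[X])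
    (hsel : ∀ z, ∃ i, (D i).eval z ≠ 0 ∧ u z = (N i).eval z / (D i).eval z)
    {I : Set ℝ} (hI : IsPreconnected I) (hD : ∀ i, D i ≠ 0 → ∀ z ∈ I, (D i).eval z ≠ 0)
    (hND : ∀ i j, N i * D j - N j * D i ≠ 0 → ∀ z ∈ I, (N i * D j - N j * D i).eval z ≠ 0) :
    ∃ Q R : ℝ[X], ∀ z ∈ I, R.eval z ≠ 0 ∧ u z = Q.eval z / R.eval z := by
  rcases I.eq_empty_or_nonempty with rfl | hne
  · exact ⟨0, 1, by simp⟩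
  set F : {i // D i ≠ 0} → Set ℝ := fun i => {z | u z * (D i).eval z = (N i).eval z}
  have hF : ∀ i, IsClosed (F i) := fun i =>
    isClosed_eq (hu.mul (D i).continuous) (N i).continuous
  have hcov : I ⊆ ⋃ i, F i := fun z _ => by
    obtain ⟨i, hi, hz⟩ := hsel z
    exact Set.mem_iUnion.2 ⟨⟨i, fun h => hi (by simp [h])⟩, by simp [F, hz, div_mul_cancel₀ _ hi]⟩
  have hlink : ∀ i j, (I ∩ F i ∩ F j).Nonempty → I ∩ F j ⊆ F i := by
    rintro ⟨i, hi⟩ ⟨j, hj⟩ ⟨z₀, ⟨hz₀, hz₀i⟩, hz₀j⟩ z ⟨hz, hzj⟩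
    have hcross : N i * D j = N j * D i := by
      refine sub_eq_zero.1 (not_not.1 fun hne => hND i j hne z₀ hz₀ ?_)
      simp only [F, Set.mem_ofPred_eq] at hz₀i hz₀j
      simp only [eval_sub, eval_mul, ← hz₀i, ← hz₀j]
      ring
    have hcross_z := congrArg (eval z) hcross
    simp only [F, Set.mem_ofPred_eq, eval_mul] at hzj hcross_z ⊢
    apply mul_right_cancel₀ (hD j hj z hz)
    linear_combination (D i).eval z * hzj - hcross_z
  obtain ⟨⟨i, hi⟩, hIi⟩ := hI.exists_subset_of_closed_cover hne hF hcov hlink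
  exact ⟨N i, D i, fun z hz => ⟨hD i hi z hz, (eq_div_iff (hD i hi z hz)).2 (hIi hz)⟩⟩

theorem piecewiseRational_of_forall_exists_eq_div {ι : Type*} [Finite ι] {u : ℝ → ℝ}
    (hu : Continuous u) (N D : ι → ℝ[X])
    (hsel : ∀ z, ∃ i, (D i).eval z ≠ 0 ∧ u z = (N i).eval z / (D i).eval z) :
    PiecewiseRational u := by
  obtain ⟨s, hs⟩ := exists_finset_forall_eval_ne_zero
    (Sum.elim D fun ij : ι × ι => N ij.1 * D ij.2 - N ij.2 * D ij.1)
  refine piecewiseRational_of_forall_isPreconnected_disjoint s fun I hI hIs =>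
    exists_eq_div_on_of_isPreconnected hu N D hsel hI (fun i hi z hz => hs (.inl i) hi z ?_)
      (fun i j hij z hz => hs (.inr (i, j)) hij z ?_)
  all_goals exact Set.disjoint_left.1 hIs hz

section Polyhedron

variable {ι K : Type*} [Fintype ι]

def polyhedron (M : Matrix K ι ℝ) (b : K → ℝ) : Set (ι → ℝ) := {y | b ≤ M *ᵥ y}

theorem isClosed_polyhedron (M : Matrix K ι ℝ) (b : K → ℝ) : IsClosed (polyhedron M b) :=
  isClosed_le continuous_const (Continuous.matrix_mulVec continuous_const continuous_id)

theorem eventually_add_smul_mem_polyhedron [Finite K] {M : Matrix K ι ℝ} {b : K → ℝ}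
    {y w : ι → ℝ} (hy : y ∈ polyhedron M b) (hw : ∀ k, (M *ᵥ y) k = b k → (M *ᵥ w) k = 0) :
    ∀ᶠ t in 𝓝 (0 : ℝ), y + t • w ∈ polyhedron M b := by
  simp only [polyhedron, Set.mem_ofPred_eq, Pi.le_def, mulVec_add, mulVec_smul, Pi.add_apply,
    Pi.smul_apply, smul_eq_mul]
  refine eventually_all.2 fun k => ?_
  rcases (hy k).eq_or_lt with hk | hk
  · exact .of_forall fun t => by rw [hw k hk.symm, ← hk, mul_zero, add_zero]
  · have hcont : Continuous fun t : ℝ => (M *ᵥ y) k + t * (M *ᵥ w) k := by fun_prop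
    exact ((hcont.tendsto 0).eventually (lt_mem_nhds (by simpa using hk))).mono fun _ h => h.le

theorem span_tight_rows_eq_top_of_isMaxOn [Finite K] {M : Matrix K ι ℝ} {b : K → ℝ}
    (φ : (ι → ℝ) →ₗ[ℝ] ℝ) {y : ι → ℝ} (hy : y ∈ polyhedron M b)
    (hφ : IsMaxOn φ (polyhedron M b) y)
    (hsq : IsMaxOn (fun y' => y' ⬝ᵥ y') {y' ∈ polyhedron M b | φ y' = φ y} y) :
    Submodule.span ℝ (M '' {k | (M *ᵥ y) k = b k}) = ⊤ := by
  classical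
  -- A direction `w` orthogonal to the tight rows keeps `y` feasible both ways, so maximality of
  -- `φ` gives `φ w = 0` and then maximality of `y ⬝ᵥ y` gives `w = 0`.
  by_contra hspan
  obtain ⟨f, hf, hker⟩ := Submodule.exists_le_ker_of_lt_top _ (lt_top_iff_ne_top.2 hspan)
  set w := (dotProductEquiv ℝ ι).symm f
  have hfw : ∀ v, f v = w ⬝ᵥ v := fun v => by
    rw [← dotProductEquiv_apply_apply, LinearEquiv.apply_symm_apply]
  have hw0 : w ≠ 0 := fun h => hf (LinearMap.ext fun v => by simp [hfw, h])
  have hw : ∀ k, (M *ᵥ y) k = b k → (M *ᵥ w) k = 0 := fun k hk => by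
    rw [mulVec, dotProduct_comm, ← hfw]
    exact hker (Submodule.subset_span ⟨k, hk, rfl⟩)
  have hev := eventually_add_smul_mem_polyhedron hy hw
  have hev' : ∀ᶠ t in 𝓝 (0 : ℝ), y + t • w ∈ polyhedron M b ∧ y + (-t) • w ∈ polyhedron M b :=
    hev.and ((continuous_neg.tendsto' (0 : ℝ) 0 neg_zero).eventually hev)
  obtain ⟨t, ht, hyt, hyt'⟩ :=
    ((eventually_mem_nhdsWithin (s := Set.Ioi 0)).and (hev'.filter_mono nhdsWithin_le_nhds)).exists
  have hφw : φ w = 0 := by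
    have h₁ := hφ hyt
    have h₂ := hφ hyt'
    simp only [Set.mem_ofPred_eq, map_add, map_smul, smul_eq_mul] at h₁ h₂
    nlinarith [Set.mem_Ioi.1 ht]
  have h₁ := hsq ⟨hyt, by simp [hφw]⟩
  have h₂ := hsq ⟨hyt', by simp [hφw]⟩
  simp only [Set.mem_ofPred_eq, dotProduct_add, add_dotProduct, dotProduct_smul, smul_dotProduct,
    smul_eq_mul] at h₁ h₂
  have hww : w ⬝ᵥ w ≤ 0 := by nlinarith [mul_pos (Set.mem_Ioi.1 ht) (Set.mem_Ioi.1 ht)]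
  exact hw0 (dotProduct_self_eq_zero.1
    (le_antisymm hww (Finset.sum_nonneg fun i _ => mul_self_nonneg (w i))))

theorem exists_mem_polyhedron_span_tight_rows_eq_top [Finite K] {M : Matrix K ι ℝ} {b : K → ℝ}
    (φ : (ι → ℝ) →ₗ[ℝ] ℝ) {m : ℝ} (hm : ∀ y ∈ polyhedron M b, φ y ≤ m)
    (hbdd : Bornology.IsBounded {y ∈ polyhedron M b | φ y = m})
    (hne : {y ∈ polyhedron M b | φ y = m}.Nonempty) :
    ∃ y ∈ polyhedron M b, φ y = m ∧ Submodule.span ℝ (M '' {k | (M *ᵥ y) k = b k}) = ⊤ := by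
  have hcompact : IsCompact {y ∈ polyhedron M b | φ y = m} :=
    hbdd.isCompact_closure.of_isClosed_subset
      ((isClosed_polyhedron M b).inter (isClosed_eq φ.continuous_of_finiteDimensional
        continuous_const)) subset_closure
  obtain ⟨y, ⟨hy, hφy⟩, hmax⟩ := hcompact.exists_isMaxOn hne
    (continuous_id.dotProduct continuous_id).continuousOn
  refine ⟨y, hy, hφy, span_tight_rows_eq_top_of_isMaxOn φ hy (fun y' hy' => hφy ▸ hm y' hy') ?_⟩
  rwa [hφy]

end Polyhedron

theorem exists_det_submatrix_ne_zero_eq_div {𝕜 ι K : Type*} [Field 𝕜] [Fintype ι] [DecidableEq ι]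
    {M : Matrix K ι 𝕜} {b : K → 𝕜} {S : Set K} {y : ι → 𝕜}
    (hspan : Submodule.span 𝕜 (M '' S) = ⊤) (hy : ∀ k ∈ S, (M *ᵥ y) k = b k) :
    ∃ c : ι → K, (M.submatrix c id).det ≠ 0 ∧
      ∀ j, y j = ((M.submatrix c id).updateCol j (b ∘ c)).det / (M.submatrix c id).det := by
  obtain ⟨t, hts, htspan, hli⟩ := exists_linearIndependent 𝕜 (M '' S)
  let basis := Module.Basis.mk hli (by rw [Subtype.range_coe, htspan, hspan])
  let e : t ≃ ι := basis.indexEquiv (Pi.basisFun 𝕜 ι)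
  choose c hcS hc using fun j => hts (e.symm j).2
  have hrows : (M.submatrix c id).row = basis.reindex e := funext fun j => by
    simp only [Matrix.row, basis, Module.Basis.reindex_apply, Module.Basis.mk_apply]
    exact hc j
  have hdet : IsUnit (M.submatrix c id).det := (isUnit_iff_isUnit_det _).1
    (linearIndependent_rows_iff_isUnit.1 (hrows ▸ (basis.reindex e).linearIndependent))
  have hsys : (M.submatrix c id) *ᵥ y = b ∘ c := funext fun j => hy (c j) (hcS j)
  refine ⟨c, hdet.ne_zero, fun j => ?_⟩
  rw [eq_div_iff hdet.ne_zero, mul_comm, ← cramer_apply, ← det_smul_inv_mulVec_eq_cramer _ _ hdet,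
    ← hsys, mulVec_mulVec, nonsing_inv_mul _ hdet, one_mulVec, Pi.smul_apply, smul_eq_mul]

section MatrixGame

variable {A B : Type} [Fintype A] [Fintype B]

noncomputable def guaranteedPayoff [Nonempty B] (g : A → B → ℝ) (x : A → ℝ) : ℝ :=
  Finset.univ.inf' Finset.univ_nonempty fun b => ∑ a, x a * g a b

theorem iInf_stdSimplex_sum_mul_eq_inf' [Nonempty B] (f : B → ℝ) :
    ⨅ y : stdSimplex ℝ B, ∑ b, f b * y.1 b = Finset.univ.inf' Finset.univ_nonempty f := by
  classical
  obtain ⟨b₀, -, hb₀⟩ := Finset.exists_mem_eq_inf' Finset.univ_nonempty f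
  have : Nonempty (stdSimplex ℝ B) := ⟨⟨_, single_mem_stdSimplex ℝ b₀⟩⟩
  have hlow : ∀ y : stdSimplex ℝ B, Finset.univ.inf' Finset.univ_nonempty f ≤ ∑ b, f b * y.1 b :=
    fun y => calc
      _ = ∑ b, Finset.univ.inf' Finset.univ_nonempty f * y.1 b := by
        rw [← Finset.mul_sum, y.2.2, mul_one]
      _ ≤ ∑ b, f b * y.1 b := Finset.sum_le_sum fun b _ =>
        mul_le_mul_of_nonneg_right (Finset.inf'_le _ (Finset.mem_univ b)) (y.2.1 b)
  refine le_antisymm ?_ (le_ciInf hlow)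
  refine (ciInf_le ⟨_, Set.forall_mem_range.2 hlow⟩ ⟨_, single_mem_stdSimplex ℝ b₀⟩).trans_eq ?_
  simp [hb₀, Pi.single_apply]

theorem matrixValue_eq_sSup_guaranteedPayoff_image [Nonempty B] (g : A → B → ℝ) :
    matrixValue g = sSup (guaranteedPayoff g '' stdSimplex ℝ A) := by
  rw [Set.image_eq_range, matrixValue]
  refine iSup_congr fun x => ?_
  rw [guaranteedPayoff, ← iInf_stdSimplex_sum_mul_eq_inf']
  refine iInf_congr fun y => ?_
  rw [Finset.sum_comm]
  simp only [Finset.sum_mul]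

theorem continuous_matrixValue {Z : Type*} [TopologicalSpace Z] [Nonempty B]
    {G : Z → A → B → ℝ} (hG : ∀ a b, Continuous fun z => G z a b) :
    Continuous fun z => matrixValue (G z) := by
  simp_rw [matrixValue_eq_sSup_guaranteedPayoff_image]
  refine (isCompact_stdSimplex ℝ A).continuous_sSup ?_
  exact Continuous.finset_inf'_apply Finset.univ_nonempty fun b _ => by fun_prop

theorem isGreatest_matrixValue [Nonempty A] [Nonempty B] (g : A → B → ℝ) :
    IsGreatest (guaranteedPayoff g '' stdSimplex ℝ A) (matrixValue g) := by
  classical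
  rw [matrixValue_eq_sSup_guaranteedPayoff_image]
  obtain ⟨a₀⟩ := ‹Nonempty A›
  refine ((isCompact_stdSimplex ℝ A).image ?_).isGreatest_sSup
    ⟨_, _, single_mem_stdSimplex ℝ a₀, rfl⟩
  exact Continuous.finset_inf'_apply Finset.univ_nonempty fun b _ => by fun_prop

end MatrixGame

section ValueLP

variable {A B : Type} {R : Type*} [CommRing R]

/-- `valueLPMatrix g *ᵥ (x, v) ≥ valueLPBound` are the constraints `x ∈ Δ(A)` and
`v ≤ ∑ a, x a * g a b` (all `b`) in the variables `(x, v) : A ⊕ Unit → R`; the two rows indexed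
by `Bool` encode `∑ a, x a = 1` as a pair of inequalities. -/
def valueLPBound : Bool ⊕ A ⊕ B → R
  | .inl true => 1
  | .inl false => -1
  | .inr _ => 0

theorem map_valueLPBound {S : Type*} [CommRing S] (f : R →+* S) :
    f ∘ valueLPBound = (valueLPBound : Bool ⊕ A ⊕ B → S) := by
  ext ((_ | _) | _ | _) <;> simp [valueLPBound]

variable [DecidableEq A]

def valueLPMatrix (g : A → B → R) : Matrix (Bool ⊕ A ⊕ B) (A ⊕ Unit) R :=
  Matrix.of fun
    | .inl true => Sum.elim 1 0
    | .inl false => Sum.elim (-1) 0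
    | .inr (.inl a) => Pi.single (.inl a) 1
    | .inr (.inr b) => Sum.elim (fun a => g a b) (-1)

theorem valueLPMatrix_map {S : Type*} [CommRing S] (f : R →+* S) (g : A → B → R) :
    (valueLPMatrix g).map f = valueLPMatrix fun a b => f (g a b) := by
  ext ((_ | _) | _ | _) (_ | _) <;> simp [valueLPMatrix, Pi.single_apply, apply_ite f]

variable [Fintype A] [Fintype B]

theorem mem_polyhedron_valueLP_iff [Nonempty B] (g : A → B → ℝ) (y : A ⊕ Unit → ℝ) :
    y ∈ polyhedron (valueLPMatrix g) valueLPBound ↔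
      y ∘ Sum.inl ∈ stdSimplex ℝ A ∧ y (.inr ()) ≤ guaranteedPayoff g (y ∘ Sum.inl) := by
  simp only [polyhedron, valueLPMatrix, Pi.le_def, valueLPBound, mulVec, dotProduct, of_apply,
    mul_comm, Fintype.sum_sum_type, Finset.univ_unique, PUnit.default_eq_unit,
    Finset.sum_singleton, Sum.forall, Bool.forall_bool, Sum.elim_inl, Pi.neg_apply, Pi.one_apply,
    neg_mul, one_mul, Finset.sum_neg_distrib, Sum.elim_inr, Pi.zero_apply, zero_mul, add_zero,
    neg_le_neg_iff, Pi.single_apply, Sum.inl.injEq, ite_mul, Finset.sum_ite_eq', Finset.mem_univ,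
    ↓reduceIte, reduceCtorEq, le_add_neg_iff_add_le, zero_add, Set.mem_ofPred_eq, stdSimplex,
    le_antisymm_iff, Function.comp_apply, guaranteedPayoff, Finset.le_inf'_iff, forall_const]
  tauto

theorem exists_matrixValue_eq_det_div_det [Nonempty A] [Nonempty B] (g : A → B → ℝ) :
    ∃ c : A ⊕ Unit → Bool ⊕ A ⊕ B, ((valueLPMatrix g).submatrix c id).det ≠ 0 ∧
      matrixValue g = (((valueLPMatrix g).submatrix c id).updateCol (.inr ())
        (valueLPBound ∘ c)).det / ((valueLPMatrix g).submatrix c id).det := by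
  obtain ⟨⟨x, hx, hxv⟩, hmax⟩ := isGreatest_matrixValue g
  set v := matrixValue g
  set P := polyhedron (valueLPMatrix g) valueLPBound
  let φ : (A ⊕ Unit → ℝ) →ₗ[ℝ] ℝ := LinearMap.proj (.inr ())
  set extend : (A → ℝ) → A ⊕ Unit → ℝ := fun x => Sum.elim x fun _ => v
  have hle : ∀ y ∈ P, φ y ≤ v := fun y hy =>
    have hy := (mem_polyhedron_valueLP_iff g y).1 hy
    hy.2.trans (hmax ⟨_, hy.1, rfl⟩)
  have hface : {y ∈ P | φ y = v} ⊆ extend '' stdSimplex ℝ A :=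
    fun y ⟨hy, hφy⟩ => ⟨y ∘ Sum.inl, ((mem_polyhedron_valueLP_iff g y).1 hy).1, by
      ext (_ | _) <;> simp [extend, ← hφy, φ]⟩
  have hbdd : Bornology.IsBounded {y ∈ P | φ y = v} :=
    ((isCompact_stdSimplex ℝ A).image (continuous_pi fun j =>
      j.casesOn continuous_apply fun _ => continuous_const)).isBounded.subset hface
  have hx : extend x ∈ {y ∈ P | φ y = v} :=
    ⟨(mem_polyhedron_valueLP_iff g _).2 ⟨hx, hxv.ge⟩, rfl⟩
  obtain ⟨y, -, hφy, hspan⟩ := exists_mem_polyhedron_span_tight_rows_eq_top φ hle hbdd ⟨_, hx⟩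
  obtain ⟨c, hc, hyc⟩ := exists_det_submatrix_ne_zero_eq_div hspan fun k hk => hk
  exact ⟨c, hc, hφy ▸ hyc (.inr ())⟩

end ValueLP

/-- If `u : ℝ → ℝ` is the value function of some two-player zero-sum polynomial game,
then `u` is continuous and piecewise rational. -/
theorem continuous_piecewise_rational_of_value_function (u : ℝ → ℝ) (hu : InV u) :
    Continuous u ∧ PiecewiseRational u := by
  classical
  obtain ⟨A, B, _, _, _, _, G, hG⟩ := hu
  obtain rfl : u = fun z => matrixValue fun a b => (G a b).eval z := funext hG
  have hcont := continuous_matrixValue fun a b => (G a b).continuous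
  refine ⟨hcont, piecewiseRational_of_forall_exists_eq_div hcont
    (fun c => (((valueLPMatrix G).submatrix c id).updateCol (.inr ()) (valueLPBound ∘ c)).det)
    (fun c => ((valueLPMatrix G).submatrix c id).det) fun z => ?_⟩
  obtain ⟨c, hc, hval⟩ := exists_matrixValue_eq_det_div_det fun a b => (G a b).eval z
  have heval : ∀ N : Matrix (A ⊕ Unit) (A ⊕ Unit) ℝ[X],
      N.det.eval z = (N.map (evalRingHom z)).det :=
    fun N => RingHom.map_det (evalRingHom z) N
  simp only [heval, map_updateCol, ← submatrix_map, valueLPMatrix_map, ← Function.comp_assoc,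
    map_valueLPBound]
  simp only [coe_evalRingHom]
  exact ⟨c, hc, hval⟩
end

section
/- If u ∈ 𝒱 and w ∈ 𝒱, then u + w ∈ 𝒱; that is, if u and w are value functions of polynomial games, then so is the function z ↦ u(z) + w(z). -/
open Polynomial

/-!
Let the players play both games at once: strategies are pairs, and the payoff of `(a₁, a₂)`
against `(b₁, b₂)` is `G a₁ b₁ + H a₂ b₂`, again a polynomial matrix. The expected payoff of mixed
strategies on the product only depends on their two marginals, and every pair of marginals
occurs (take the product distribution), so both the inner infimum and the outer supremum
split into sums.
-/

namespace stdSimplex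

variable {S : Type*} [Semiring S] [PartialOrder S] [IsOrderedRing S]
  {X Y : Type*} [Fintype X] [Fintype Y]

lemma sum_map_mul (f : X → Y) (x : stdSimplex S X) (h : Y → S) :
    ∑ j, map f x j * h j = ∑ i, x i * h (f i) := by
  classical
  simp only [map_coe, FunOnFinite.linearMap_apply_apply, Finset.sum_mul]
  calc ∑ j, ∑ i with f i = j, x i * h j = ∑ j, ∑ i with f i = j, x i * h (f i) :=
        Finset.sum_congr rfl fun j _ => Finset.sum_congr rfl fun i hi => by
          rw [(Finset.mem_filter.1 hi).2]
    _ = ∑ i, x i * h (f i) := Finset.sum_fiberwise _ _ _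

noncomputable def prod (x : stdSimplex S X) (y : stdSimplex S Y) : stdSimplex S (X × Y) :=
  ⟨fun p => x p.1 * y p.2, fun p => mul_nonneg (zero_le x p.1) (zero_le y p.2), by
    simp [Fintype.sum_prod_type, ← Finset.mul_sum]⟩

@[simp]
lemma prod_apply (x : stdSimplex S X) (y : stdSimplex S Y) (p : X × Y) :
    prod x y p = x p.1 * y p.2 := rfl

@[simp]
lemma map_fst_prod (x : stdSimplex S X) (y : stdSimplex S Y) : map Prod.fst (prod x y) = x := by
  classical
  ext i
  simp [FunOnFinite.linearMap_apply_apply, Finset.sum_filter, Fintype.sum_prod_type,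
    ← Finset.mul_sum]

@[simp]
lemma map_snd_prod (x : stdSimplex S X) (y : stdSimplex S Y) : map Prod.snd (prod x y) = y := by
  classical
  ext j
  simp [FunOnFinite.linearMap_apply_apply, Finset.sum_filter, Fintype.sum_prod_type_right,
    ← Finset.sum_mul]

lemma surjective_map_fst_snd :
    Function.Surjective fun p : stdSimplex S (X × Y) => (map Prod.fst p, map Prod.snd p) :=
  fun q => ⟨prod q.1 q.2, by simp⟩

end stdSimplex

section

variable {α ι κ : Type*} [Nonempty ι] [Nonempty κ] [ConditionallyCompleteLattice α] [AddGroup α]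
  [AddLeftMono α] [AddRightMono α] {f : ι → α} {g : κ → α}

lemma ciSup_add_ciSup (hf : BddAbove (Set.range f)) (hg : BddAbove (Set.range g)) :
    (⨆ i, f i) + ⨆ j, g j = ⨆ p : ι × κ, f p.1 + g p.2 := by
  obtain ⟨a, ha⟩ := hf
  obtain ⟨b, hb⟩ := hg
  have hfg : BddAbove (Set.range fun p : ι × κ => f p.1 + g p.2) := by
    refine ⟨a + b, ?_⟩
    rintro _ ⟨p, rfl⟩
    exact add_le_add (ha ⟨p.1, rfl⟩) (hb ⟨p.2, rfl⟩)
  exact le_antisymm (ciSup_add_ciSup_le fun i j => le_ciSup hfg (i, j))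
    (ciSup_le fun p => add_le_add (le_ciSup ⟨a, ha⟩ p.1) (le_ciSup ⟨b, hb⟩ p.2))

lemma ciInf_add_ciInf (hf : BddBelow (Set.range f)) (hg : BddBelow (Set.range g)) :
    (⨅ i, f i) + ⨅ j, g j = ⨅ p : ι × κ, f p.1 + g p.2 :=
  ciSup_add_ciSup (α := αᵒᵈ) hf hg

end

section Payoff

variable {A B A' B' : Type*} [Fintype A] [Fintype B] [Fintype A'] [Fintype B']

noncomputable def payoff (G : A → B → ℝ) (x : A → ℝ) (y : B → ℝ) : ℝ :=
  ∑ a, ∑ b, x a * G a b * y b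

lemma payoff_add (G H : A → B → ℝ) (x : A → ℝ) (y : B → ℝ) :
    payoff (fun a b => G a b + H a b) x y = payoff G x y + payoff H x y := by
  simp only [payoff, mul_add, add_mul, Finset.sum_add_distrib]

lemma payoff_map (G : A' → B' → ℝ) (f : A → A') (g : B → B') (x : stdSimplex ℝ A)
    (y : stdSimplex ℝ B) :
    payoff G (stdSimplex.map f x) (stdSimplex.map g y) = payoff (fun a b => G (f a) (g b)) x y := by
  have row (a' : A') : ∑ b', G a' b' * stdSimplex.map g y b' = ∑ b, G a' (g b) * y b := by
    simp only [mul_comm (G _ _), stdSimplex.sum_map_mul]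
  simp only [payoff, mul_assoc, ← Finset.mul_sum, row, stdSimplex.sum_map_mul]

lemma abs_payoff_le (G : A → B → ℝ) (x : stdSimplex ℝ A) (y : stdSimplex ℝ B) :
    |payoff G x y| ≤ ∑ a, ∑ b, |G a b| := by
  refine (Finset.abs_sum_le_sum_abs _ _).trans (Finset.sum_le_sum fun a _ => ?_)
  refine (Finset.abs_sum_le_sum_abs _ _).trans (Finset.sum_le_sum fun b _ => ?_)
  rw [abs_mul, abs_mul, abs_of_nonneg (stdSimplex.zero_le x a),
    abs_of_nonneg (stdSimplex.zero_le y b)]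
  calc x a * |G a b| * y b ≤ 1 * |G a b| * 1 := by gcongr <;> simp
    _ = |G a b| := by ring

end Payoff

section Value

variable {A B : Type*} [Fintype A] [Fintype B]

noncomputable def securityLevel (G : A → B → ℝ) (x : stdSimplex ℝ A) : ℝ :=
  ⨅ y : stdSimplex ℝ B, payoff G x y

lemma bddBelow_range_payoff (G : A → B → ℝ) (x : stdSimplex ℝ A) :
    BddBelow (Set.range fun y : stdSimplex ℝ B => payoff G x y) := by
  refine ⟨-∑ a, ∑ b, |G a b|, ?_⟩
  rintro _ ⟨y, rfl⟩
  exact neg_le_of_abs_le (abs_payoff_le G x y)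

lemma bddAbove_range_securityLevel [Nonempty B] (G : A → B → ℝ) :
    BddAbove (Set.range (securityLevel G)) := by
  obtain ⟨y⟩ : Nonempty (stdSimplex ℝ B) := inferInstance
  refine ⟨∑ a, ∑ b, |G a b|, ?_⟩
  rintro _ ⟨x, rfl⟩
  exact (ciInf_le (bddBelow_range_payoff G x) y).trans (le_of_abs_le (abs_payoff_le G x y))

variable {A₁ A₂ B₁ B₂ : Type*} [Fintype A₁] [Fintype A₂] [Fintype B₁] [Fintype B₂]

lemma payoff_prod_add (G : A₁ → B₁ → ℝ) (H : A₂ → B₂ → ℝ) (x : stdSimplex ℝ (A₁ × A₂))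
    (y : stdSimplex ℝ (B₁ × B₂)) :
    payoff (fun (p : A₁ × A₂) (q : B₁ × B₂) => G p.1 q.1 + H p.2 q.2) x y =
      payoff G (stdSimplex.map Prod.fst x) (stdSimplex.map Prod.fst y) +
        payoff H (stdSimplex.map Prod.snd x) (stdSimplex.map Prod.snd y) := by
  rw [payoff_add, payoff_map, payoff_map]

lemma securityLevel_prod_add [Nonempty B₁] [Nonempty B₂] (G : A₁ → B₁ → ℝ) (H : A₂ → B₂ → ℝ)
    (x : stdSimplex ℝ (A₁ × A₂)) :
    securityLevel (fun (p : A₁ × A₂) (q : B₁ × B₂) => G p.1 q.1 + H p.2 q.2) x =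
      securityLevel G (stdSimplex.map Prod.fst x) +
        securityLevel H (stdSimplex.map Prod.snd x) := by
  unfold securityLevel
  rw [ciInf_add_ciInf (bddBelow_range_payoff _ _) (bddBelow_range_payoff _ _)]
  simp only [payoff_prod_add]
  exact stdSimplex.surjective_map_fst_snd.iInf_comp fun q => payoff G _ q.1 + payoff H _ q.2

end Value

lemma matrixValue_eq_iSup_securityLevel {A B : Type} [Fintype A] [Fintype B] (G : A → B → ℝ) :
    matrixValue G = ⨆ x, securityLevel G x :=
  rfl

lemma matrixValue_prod_add {A₁ A₂ B₁ B₂ : Type} [Fintype A₁] [Fintype A₂] [Fintype B₁]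
    [Fintype B₂] [Nonempty A₁] [Nonempty A₂] [Nonempty B₁] [Nonempty B₂]
    (G : A₁ → B₁ → ℝ) (H : A₂ → B₂ → ℝ) :
    matrixValue (fun (p : A₁ × A₂) (q : B₁ × B₂) => G p.1 q.1 + H p.2 q.2) =
      matrixValue G + matrixValue H := by
  simp only [matrixValue_eq_iSup_securityLevel]
  rw [ciSup_add_ciSup (bddAbove_range_securityLevel G) (bddAbove_range_securityLevel H)]
  simp only [securityLevel_prod_add]
  exact stdSimplex.surjective_map_fst_snd.iSup_comp fun q =>
    securityLevel G q.1 + securityLevel H q.2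

/-- If `u` and `w` are value functions of polynomial games, then so is `z ↦ u z + w z`. -/
theorem InV.add (u w : ℝ → ℝ) (hu : InV u) (hw : InV w) :
    InV (fun z => u z + w z) := by
  obtain ⟨A₁, B₁, _, _, _, _, G, hG⟩ := hu
  obtain ⟨A₂, B₂, _, _, _, _, H, hH⟩ := hw
  refine ⟨A₁ × A₂, B₁ × B₂, inferInstance, inferInstance, inferInstance, inferInstance,
    fun p q => G p.1 q.1 + H p.2 q.2, fun z => ?_⟩
  simp only [eval_add, hG, hH]
  exact (matrixValue_prod_add _ _).symm
end

section
/- If u ∈ 𝒱 and w ∈ 𝒱, then max{u, w} ∈ 𝒱; that is, if u and w are value functions of polynomial games, then so is the function z ↦ max{u(z), w(z)}. -/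
open Polynomial

/-!
Given games `M₁` and `M₂`, let Player 1 first choose which of them is played while Player 2
chooses a column of each. Restricting to the rows of `Mᵢ` shows the new game is worth at least
`val Mᵢ`, since a column strategy of Player 2 then acts through its marginal. Conversely, a row
strategy putting mass `t` on `M₁` and `1 - t` on `M₂` secures, by positive homogeneity in the row
weights, at most `t * val M₁ + (1 - t) * val M₂` against product column strategies.
Evaluating polynomials at `z` commutes with this construction.
-/

open Matrix

namespace MatrixGame

section Value

variable {A B A' B' : Type} [Fintype A] [Fintype B] [Fintype A'] [Fintype B']

/-- The payoff Player 1 secures with row weights `x`; these need not be normalised, which makes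
`guarantee M` positively homogeneous. -/
noncomputable def guarantee (M : Matrix A B ℝ) (x : A → ℝ) : ℝ :=
  ⨅ y : stdSimplex ℝ B, x ⬝ᵥ M *ᵥ y.1

theorem matrixValue_eq_iSup_guarantee (M : Matrix A B ℝ) :
    matrixValue M = ⨆ x : stdSimplex ℝ A, guarantee M x.1 := by
  simp only [matrixValue, guarantee, dotProduct, mulVec, Finset.mul_sum, mul_assoc]

theorem guarantee_le_dotProduct_mulVec (M : Matrix A B ℝ) (x : A → ℝ) (y : stdSimplex ℝ B) :
    guarantee M x ≤ x ⬝ᵥ M *ᵥ y.1 :=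
  ciInf_le (isCompact_range (by fun_prop)).bddBelow y

theorem guarantee_le_matrixValue [Nonempty B] (M : Matrix A B ℝ) (x : stdSimplex ℝ A) :
    guarantee M x.1 ≤ matrixValue M := by
  obtain ⟨y⟩ : Nonempty (stdSimplex ℝ B) := inferInstance
  have hbdd : BddAbove (Set.range fun x : stdSimplex ℝ A => guarantee M x.1) :=
    BddAbove.range_mono _ (fun x => guarantee_le_dotProduct_mulVec M x.1 y)
      (isCompact_range (by fun_prop)).bddAbove
  rw [matrixValue_eq_iSup_guarantee]
  exact le_ciSup hbdd x

theorem matrixValue_le [Nonempty A] (M : Matrix A B ℝ) {c : ℝ}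
    (h : ∀ x : stdSimplex ℝ A, guarantee M x.1 ≤ c) : matrixValue M ≤ c := by
  rw [matrixValue_eq_iSup_guarantee]
  exact ciSup_le h

theorem guarantee_smul (M : Matrix A B ℝ) (x : A → ℝ) {c : ℝ} (hc : 0 ≤ c) :
    guarantee M (c • x) = c * guarantee M x := by
  simp only [guarantee, smul_dotProduct, smul_eq_mul, Real.mul_iInf_of_nonneg hc]

theorem guarantee_le_sum_mul_matrixValue [Nonempty B] (M : Matrix A B ℝ) {x : A → ℝ}
    (hx : 0 ≤ x) : guarantee M x ≤ (∑ a, x a) * matrixValue M := by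
  rcases (Finset.sum_nonneg fun a _ => hx a : 0 ≤ ∑ a, x a).eq_or_lt with ht | ht
  · obtain rfl : x = 0 := funext fun a =>
      (Finset.sum_eq_zero_iff_of_nonneg fun a _ => hx a).1 ht.symm a (Finset.mem_univ a)
    simp [guarantee]
  set t := ∑ a, x a
  have hx' : t⁻¹ • x ∈ stdSimplex ℝ A :=
    ⟨fun a => mul_nonneg (inv_nonneg.2 ht.le) (hx a), by simp [← Finset.mul_sum, t, ht.ne']⟩
  calc guarantee M x = t * guarantee M (t⁻¹ • x) := by
        rw [← guarantee_smul M _ ht.le, smul_smul, mul_inv_cancel₀ ht.ne', one_smul]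
    _ ≤ t * matrixValue M := by gcongr; exact guarantee_le_matrixValue M ⟨_, hx'⟩

theorem map_dotProduct (f : A → A') (x : stdSimplex ℝ A) (v : A' → ℝ) :
    (stdSimplex.map f x).1 ⬝ᵥ v = x.1 ⬝ᵥ (v ∘ f) := by
  classical
  change FunOnFinite.linearMap ℝ ℝ f x.1 ⬝ᵥ v = _
  simp only [dotProduct, FunOnFinite.linearMap_apply_apply, Finset.sum_mul, Function.comp_apply]
  rw [← Finset.sum_fiberwise Finset.univ f fun a => x.1 a * v (f a)]
  refine Finset.sum_congr rfl fun a' _ => Finset.sum_congr rfl fun a ha => ?_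
  rw [(Finset.mem_filter.1 ha).2]

/-- Player 1 plays in `N` the pushforward of a strategy in `M`; each column strategy of `N` then
pays what its pushforward pays in `M`. -/
theorem matrixValue_le_of_submatrix_eq [Nonempty A] [Nonempty B'] {M : Matrix A B ℝ}
    {N : Matrix A' B' ℝ} (f : A → A') (g : B' → B) (h : N.submatrix f id = M.submatrix id g) :
    matrixValue M ≤ matrixValue N := by
  refine matrixValue_le M fun x => le_trans (le_ciInf fun y => ?_)
    (guarantee_le_matrixValue N (stdSimplex.map f x))
  calc guarantee M x.1 ≤ x.1 ⬝ᵥ M *ᵥ (stdSimplex.map g y).1 :=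
        guarantee_le_dotProduct_mulVec M x.1 _
    _ = (stdSimplex.map f x).1 ⬝ᵥ N *ᵥ y.1 := by
      rw [map_dotProduct, dotProduct_mulVec, dotProduct_comm (x.1 ᵥ* M), map_dotProduct]
      change y.1 ⬝ᵥ x.1 ᵥ* M.submatrix id g = x.1 ⬝ᵥ N.submatrix f id *ᵥ y.1
      rw [h, dotProduct_comm, dotProduct_mulVec]

end Value

section MaxGame

variable {A₁ A₂ B₁ B₂ : Type}

/-- Player 1 chooses which of the two games is played, Player 2 commits to a column in each. -/
def maxGame {R : Type*} (M₁ : Matrix A₁ B₁ R) (M₂ : Matrix A₂ B₂ R) :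
    Matrix (A₁ ⊕ A₂) (B₁ × B₂) R :=
  fromRows (M₁.submatrix id Prod.fst) (M₂.submatrix id Prod.snd)

theorem maxGame_map {R S : Type*} (M₁ : Matrix A₁ B₁ R) (M₂ : Matrix A₂ B₂ R) (f : R → S) :
    (maxGame M₁ M₂).map f = maxGame (M₁.map f) (M₂.map f) := by
  rw [maxGame, fromRows_map]
  rfl

variable [Fintype B₁] [Fintype B₂]

theorem prod_mem_stdSimplex {y₁ : B₁ → ℝ} {y₂ : B₂ → ℝ} (h₁ : y₁ ∈ stdSimplex ℝ B₁)
    (h₂ : y₂ ∈ stdSimplex ℝ B₂) : (fun b : B₁ × B₂ => y₁ b.1 * y₂ b.2) ∈ stdSimplex ℝ (B₁ × B₂) :=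
  ⟨fun b => mul_nonneg (h₁.1 b.1) (h₂.1 b.2), by
    rw [Fintype.sum_prod_type, ← Finset.sum_mul_sum, h₁.2, h₂.2, one_mul]⟩

theorem submatrix_fst_mulVec_prod {R : Type*} [CommSemiring R] (M : Matrix A₁ B₁ R)
    (y₁ : B₁ → R) {y₂ : B₂ → R} (h₂ : ∑ b, y₂ b = 1) :
    M.submatrix id Prod.fst *ᵥ (fun b => y₁ b.1 * y₂ b.2) = M *ᵥ y₁ := by
  ext a
  simp [mulVec, dotProduct, Fintype.sum_prod_type, ← mul_assoc, ← Finset.mul_sum, h₂]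

theorem submatrix_snd_mulVec_prod {R : Type*} [CommSemiring R] (M : Matrix A₂ B₂ R)
    {y₁ : B₁ → R} (y₂ : B₂ → R) (h₁ : ∑ b, y₁ b = 1) :
    M.submatrix id Prod.snd *ᵥ (fun b => y₁ b.1 * y₂ b.2) = M *ᵥ y₂ := by
  ext a
  simp [mulVec, dotProduct, Fintype.sum_prod_type_right, mul_left_comm (M a _),
    ← Finset.sum_mul, h₁]

variable [Fintype A₁] [Fintype A₂]

theorem matrixValue_le_matrixValue_maxGame_left [Nonempty A₁] [Nonempty B₁] [Nonempty B₂]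
    (M₁ : Matrix A₁ B₁ ℝ) (M₂ : Matrix A₂ B₂ ℝ) : matrixValue M₁ ≤ matrixValue (maxGame M₁ M₂) :=
  matrixValue_le_of_submatrix_eq Sum.inl Prod.fst rfl

theorem matrixValue_le_matrixValue_maxGame_right [Nonempty A₂] [Nonempty B₁] [Nonempty B₂]
    (M₁ : Matrix A₁ B₁ ℝ) (M₂ : Matrix A₂ B₂ ℝ) : matrixValue M₂ ≤ matrixValue (maxGame M₁ M₂) :=
  matrixValue_le_of_submatrix_eq Sum.inr Prod.snd rfl

theorem dotProduct_maxGame_mulVec_prod (M₁ : Matrix A₁ B₁ ℝ) (M₂ : Matrix A₂ B₂ ℝ)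
    (x : A₁ ⊕ A₂ → ℝ) (y₁ : stdSimplex ℝ B₁) (y₂ : stdSimplex ℝ B₂) :
    x ⬝ᵥ maxGame M₁ M₂ *ᵥ (fun b => y₁.1 b.1 * y₂.1 b.2)
      = (x ∘ Sum.inl) ⬝ᵥ M₁ *ᵥ y₁.1 + (x ∘ Sum.inr) ⬝ᵥ M₂ *ᵥ y₂.1 := by
  rw [maxGame, fromRows_mulVec, submatrix_fst_mulVec_prod _ _ y₂.2.2,
    submatrix_snd_mulVec_prod _ _ y₁.2.2, ← sumElim_dotProduct_sumElim, Sum.elim_comp_inl_inr]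

theorem guarantee_maxGame_le (M₁ : Matrix A₁ B₁ ℝ) (M₂ : Matrix A₂ B₂ ℝ) (x : A₁ ⊕ A₂ → ℝ)
    [Nonempty B₁] [Nonempty B₂] :
    guarantee (maxGame M₁ M₂) x ≤ guarantee M₁ (x ∘ Sum.inl) + guarantee M₂ (x ∘ Sum.inr) :=
  le_ciInf_add_ciInf fun y₁ y₂ =>
    (guarantee_le_dotProduct_mulVec _ x ⟨_, prod_mem_stdSimplex y₁.2 y₂.2⟩).trans_eq
      (dotProduct_maxGame_mulVec_prod M₁ M₂ x y₁ y₂)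

theorem matrixValue_maxGame_le [Nonempty A₁] [Nonempty B₁] [Nonempty B₂]
    (M₁ : Matrix A₁ B₁ ℝ) (M₂ : Matrix A₂ B₂ ℝ) :
    matrixValue (maxGame M₁ M₂) ≤ max (matrixValue M₁) (matrixValue M₂) := by
  refine matrixValue_le _ fun x => ?_
  have hx : 0 ≤ x.1 := x.2.1
  have h₁ : 0 ≤ ∑ a, x.1 (Sum.inl a) := Finset.sum_nonneg fun a _ => hx _
  have h₂ : 0 ≤ ∑ a, x.1 (Sum.inr a) := Finset.sum_nonneg fun a _ => hx _
  have hsum : ∑ a, x.1 (Sum.inl a) + ∑ a, x.1 (Sum.inr a) = 1 := by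
    rw [← Fintype.sum_sum_type]
    exact x.2.2
  calc guarantee (maxGame M₁ M₂) x.1
      ≤ guarantee M₁ (x.1 ∘ Sum.inl) + guarantee M₂ (x.1 ∘ Sum.inr) := guarantee_maxGame_le ..
    _ ≤ (∑ a, x.1 (Sum.inl a)) * matrixValue M₁ + (∑ a, x.1 (Sum.inr a)) * matrixValue M₂ :=
      add_le_add (guarantee_le_sum_mul_matrixValue M₁ fun a => hx _)
        (guarantee_le_sum_mul_matrixValue M₂ fun a => hx _)
    _ ≤ (∑ a, x.1 (Sum.inl a)) * max (matrixValue M₁) (matrixValue M₂)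
          + (∑ a, x.1 (Sum.inr a)) * max (matrixValue M₁) (matrixValue M₂) := by
      gcongr
      exacts [le_max_left _ _, le_max_right _ _]
    _ = max (matrixValue M₁) (matrixValue M₂) := by rw [← add_mul, hsum, one_mul]

theorem matrixValue_maxGame [Nonempty A₁] [Nonempty A₂] [Nonempty B₁] [Nonempty B₂]
    (M₁ : Matrix A₁ B₁ ℝ) (M₂ : Matrix A₂ B₂ ℝ) :
    matrixValue (maxGame M₁ M₂) = max (matrixValue M₁) (matrixValue M₂) :=
  (matrixValue_maxGame_le M₁ M₂).antisymm (max_le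
    (matrixValue_le_matrixValue_maxGame_left M₁ M₂)
    (matrixValue_le_matrixValue_maxGame_right M₁ M₂))

end MaxGame

end MatrixGame

/-- If `u` and `w` are value functions of polynomial games, then so is
`z ↦ max (u z) (w z)`. -/
theorem InV.max (u w : ℝ → ℝ) (hu : InV u) (hw : InV w) :
    InV (fun z => max (u z) (w z)) := by
  obtain ⟨A₁, B₁, _, _, _, _, G₁, hG₁⟩ := hu
  obtain ⟨A₂, B₂, _, _, _, _, G₂, hG₂⟩ := hw
  refine ⟨A₁ ⊕ A₂, B₁ × B₂, inferInstance, inferInstance, inferInstance, inferInstance,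
    MatrixGame.maxGame (of G₁) (of G₂), fun z => ?_⟩
  change _ = matrixValue ((MatrixGame.maxGame (of G₁) (of G₂)).map (eval z))
  rw [MatrixGame.maxGame_map, MatrixGame.matrixValue_maxGame]
  exact congrArg₂ _ (hG₁ z) (hG₂ z)
end

section
/- If u ∈ 𝒱 and there exists ε > 0 such that u(z) ≥ ε for every z ∈ ℝ, then 1/u ∈ 𝒱; that is, the function z ↦ 1/u(z) is the value function of some polynomial game. -/
open Polynomial

/-!
By the minimax theorem (a consequence of Hahn–Banach separation), a matrix game `M` of value
`v ≥ ε > 0` has optimal strategies `x` and `y`. In `reciprocalGame ε⁻¹ M` Player 1 either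
plays a safe row or a pair `(a, b)`, and Player 2 either challenges the pair as the row player of
`M` (columns `inl b'`) or as its column player (columns `inr a'`). Against `x` and `y` this is the
`2 × 2` game `[[-1/ε, 1/ε], [v/ε², 2/ε - v/ε²]]`, whose value is `1/v`; its optimal weights
`ε/v` (on the pairs, spread as `x ⊗ y`) and `(1 - ε/v)/2` (on the `inl` columns, spread as `y`)
give optimal strategies of the big game. The entries of `reciprocalGame` are polynomials in those
of `M`, so the construction applied to a polynomial game computes `1/u` at every point.
-/

open Matrix

section StdSimplex

variable {ι κ : Type*} [Fintype ι] [Fintype κ] {p f x : ι → ℝ} {y : κ → ℝ} {c t : ℝ}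

theorem dotProduct_le_of_mem_stdSimplex (hp : p ∈ stdSimplex ℝ ι) (hf : ∀ i, f i ≤ c) :
    p ⬝ᵥ f ≤ c :=
  calc p ⬝ᵥ f ≤ ∑ i, p i * c :=
        Finset.sum_le_sum fun i _ => mul_le_mul_of_nonneg_left (hf i) (hp.1 i)
    _ = c := by rw [← Finset.sum_mul, hp.2, one_mul]

theorem le_dotProduct_of_mem_stdSimplex (hp : p ∈ stdSimplex ℝ ι) (hf : ∀ i, c ≤ f i) :
    c ≤ p ⬝ᵥ f :=
  calc c = ∑ i, p i * c := by rw [← Finset.sum_mul, hp.2, one_mul]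
    _ ≤ p ⬝ᵥ f := Finset.sum_le_sum fun i _ => mul_le_mul_of_nonneg_left (hf i) (hp.1 i)

theorem sum_prod_mul_eq_one (hx : ∑ i, x i = 1) (hy : ∑ j, y j = 1) :
    ∑ p : ι × κ, x p.1 * y p.2 = 1 := by
  rw [Fintype.sum_prod_type, ← Finset.sum_mul_sum, hx, hy, one_mul]

theorem mul_mem_stdSimplex_prod (hx : x ∈ stdSimplex ℝ ι) (hy : y ∈ stdSimplex ℝ κ) :
    (fun p : ι × κ => x p.1 * y p.2) ∈ stdSimplex ℝ (ι × κ) :=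
  ⟨fun p => mul_nonneg (hx.1 p.1) (hy.1 p.2), sum_prod_mul_eq_one hx.2 hy.2⟩

theorem option_elim_mem_stdSimplex (ht₀ : 0 ≤ t) (ht₁ : t ≤ 1) (hx : x ∈ stdSimplex ℝ ι) :
    (fun o : Option ι => o.elim (1 - t) fun i => t * x i) ∈ stdSimplex ℝ (Option ι) :=
  ⟨fun o => o.rec (sub_nonneg.2 ht₁) fun i => mul_nonneg ht₀ (hx.1 i), by
    simp [Fintype.sum_option, ← Finset.mul_sum, hx.2]⟩

theorem sum_elim_mem_stdSimplex (ht₀ : 0 ≤ t) (ht₁ : t ≤ 1) (hx : x ∈ stdSimplex ℝ ι)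
    (hy : y ∈ stdSimplex ℝ κ) : Sum.elim (t • x) ((1 - t) • y) ∈ stdSimplex ℝ (ι ⊕ κ) :=
  ⟨Sum.rec (fun i => mul_nonneg ht₀ (hx.1 i)) fun j => mul_nonneg (sub_nonneg.2 ht₁) (hy.1 j),
    by simp [Fintype.sum_sum_type, ← Finset.mul_sum, hx.2, hy.2]⟩

theorem sum_prod_mul_mul_fst (hy : ∑ j, y j = 1) (g : ι → ℝ) :
    ∑ p : ι × κ, x p.1 * y p.2 * g p.1 = x ⬝ᵥ g := by
  simp [Fintype.sum_prod_type, dotProduct, mul_right_comm _ _ (g _), ← Finset.mul_sum, hy]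

theorem sum_prod_mul_mul_snd (hx : ∑ i, x i = 1) (g : κ → ℝ) :
    ∑ p : ι × κ, x p.1 * y p.2 * g p.2 = y ⬝ᵥ g := by
  simp [Fintype.sum_prod_type_right, dotProduct, mul_comm (x _), mul_assoc, ← Finset.mul_sum, hx]

end StdSimplex

section Separation

variable {ι : Type*} [Fintype ι] {φ : ι → ℝ} {w c : ℝ}

theorem nonneg_of_forall_lt_dotProduct_lt (h : ∀ v : ι → ℝ, (∀ i, v i < w) → v ⬝ᵥ φ < c)
    (i : ι) : 0 ≤ φ i := by
  classical
  by_contra! hφi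
  have hbase : (fun _ => w - 1) ⬝ᵥ φ < c := h _ fun _ => by linarith
  -- moving down along `eᵢ` stays below `w`, but a negative `φ i` raises the pairing up to `c`
  set t := (c - (fun _ => w - 1) ⬝ᵥ φ) / -φ i
  have ht : 0 ≤ t := div_nonneg (by linarith) (by linarith)
  have htφ : t * -φ i = c - (fun _ => w - 1) ⬝ᵥ φ := div_mul_cancel₀ _ (by linarith)
  have hmem (j : ι) : ((fun _ => w - 1) - t • Pi.single i 1 : ι → ℝ) j < w := by
    have : 0 ≤ t * (Pi.single i 1 : ι → ℝ) j :=
      mul_nonneg ht (by rw [Pi.single_apply]; split_ifs <;> norm_num)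
    simp only [Pi.sub_apply, Pi.smul_apply, smul_eq_mul]
    linarith
  have := h _ hmem
  rw [sub_dotProduct, smul_dotProduct, single_one_dotProduct, smul_eq_mul] at this
  linarith

theorem mul_sum_le_of_forall_lt_dotProduct_lt
    (h : ∀ v : ι → ℝ, (∀ i, v i < w) → v ⬝ᵥ φ < c) : w * ∑ i, φ i ≤ c := by
  have hsum : 0 ≤ ∑ i, φ i :=
    Finset.sum_nonneg fun i _ => nonneg_of_forall_lt_dotProduct_lt h i
  by_contra! hlt
  set δ := (w * ∑ i, φ i - c) / (∑ i, φ i + 1)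
  have hδ : 0 < δ := div_pos (by linarith) (by linarith)
  have hδsum : δ * (∑ i, φ i + 1) = w * ∑ i, φ i - c := div_mul_cancel₀ _ (by linarith)
  have := h (fun _ => w - δ) fun _ => by linarith
  have hconst : (fun _ => w - δ) ⬝ᵥ φ = (w - δ) * ∑ i, φ i := by
    simp [dotProduct, Finset.mul_sum]
  rw [hconst] at this
  linarith

theorem exists_mem_stdSimplex_forall_le_dotProduct {K : Set (ι → ℝ)} (hconv : Convex ℝ K)
    (hne : K.Nonempty) (hK : ∀ k ∈ K, ∃ i, w ≤ k i) :
    ∃ x ∈ stdSimplex ℝ ι, ∀ k ∈ K, w ≤ x ⬝ᵥ k := by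
  classical
  have hdisj : Disjoint (Set.univ.pi fun _ => Set.Iio w) K := by
    refine Set.disjoint_left.2 fun v hv hvK => ?_
    obtain ⟨i, hi⟩ := hK v hvK
    exact hi.not_gt (hv i (Set.mem_univ i))
  -- the normal of a hyperplane separating `K` from the open orthant below `w`, normalised, is `x`
  obtain ⟨f, c, hfS, hfK⟩ := geometric_hahn_banach_open (convex_pi fun _ _ => convex_Iio w)
    (isOpen_set_pi Set.finite_univ fun _ _ => isOpen_Iio) hconv hdisj
  set φ : ι → ℝ := fun i => f fun j => if i = j then 1 else 0
  have hf (v : ι → ℝ) : f v = v ⬝ᵥ φ := f.toLinearMap.pi_apply_eq_sum_univ v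
  have hS (v : ι → ℝ) (hv : ∀ i, v i < w) : v ⬝ᵥ φ < c := hf v ▸ hfS v fun i _ => hv i
  have hφ := nonneg_of_forall_lt_dotProduct_lt hS
  have hsum : 0 < ∑ i, φ i := by
    refine (Finset.sum_nonneg fun i _ => hφ i).lt_of_ne fun h0 => ?_
    have hφ0 : φ = 0 := funext fun i =>
      (Finset.sum_eq_zero_iff_of_nonneg fun i _ => hφ i).1 h0.symm i (Finset.mem_univ i)
    obtain ⟨k, hk⟩ := hne
    have := (hS (fun _ => w - 1) fun _ => by linarith).trans_le (hf k ▸ hfK k hk)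
    simp [hφ0] at this
  refine ⟨(∑ i, φ i)⁻¹ • φ, ⟨fun i => mul_nonneg (inv_nonneg.2 hsum.le) (hφ i), ?_⟩,
    fun k hk => ?_⟩
  · simp [← Finset.mul_sum, inv_mul_cancel₀ hsum.ne']
  · rw [smul_dotProduct, smul_eq_mul, le_inv_mul_iff₀ hsum, mul_comm, dotProduct_comm, ← hf]
    exact (mul_sum_le_of_forall_lt_dotProduct_lt hS).trans (hfK k hk)

end Separation

theorem Matrix.exists_saddlePoint {E F : Type*} [Fintype E] [Fintype F] [Nonempty E]
    [Nonempty F] (M : Matrix E F ℝ) :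
    ∃ x ∈ stdSimplex ℝ E, ∃ y ∈ stdSimplex ℝ F, ∃ v,
      (∀ b, v ≤ (x ᵥ* M) b) ∧ ∀ a, (M *ᵥ y) a ≤ v := by
  classical
  let rowMax : (F → ℝ) → ℝ := fun y => Finset.univ.sup' Finset.univ_nonempty (M *ᵥ y)
  have hcont : Continuous rowMax :=
    Continuous.finset_sup'_apply _ fun a _ => by simp only [mulVec, dotProduct]; fun_prop
  obtain ⟨y, hy, hmin⟩ := (isCompact_stdSimplex ℝ F).exists_isMinOn
    ⟨_, single_mem_stdSimplex ℝ (Classical.arbitrary F)⟩ hcont.continuousOn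
  obtain ⟨x, hx, hxK⟩ := exists_mem_stdSimplex_forall_le_dotProduct (w := rowMax y)
    ((convex_stdSimplex ℝ F).linear_image M.mulVecLin)
    ((Set.nonempty_of_mem hy).image _) (by
      rintro _ ⟨y', hy', rfl⟩
      obtain ⟨a, -, ha⟩ := Finset.exists_mem_eq_sup' Finset.univ_nonempty (M *ᵥ y')
      exact ⟨a, (hmin hy').trans_eq ha⟩)
  refine ⟨x, hx, y, hy, rowMax y, fun b => ?_, fun a => Finset.le_sup' _ (Finset.mem_univ a)⟩
  have := hxK _ ⟨_, single_mem_stdSimplex ℝ b, rfl⟩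
  rwa [Matrix.mulVecLin_apply, dotProduct_mulVec, dotProduct_single_one] at this

section MatrixGame

variable {E F : Type} [Fintype E] [Fintype F]

theorem sum_sum_mul_mul_eq_dotProduct_mulVec (M : Matrix E F ℝ) (x : E → ℝ) (y : F → ℝ) :
    ∑ a, ∑ b, x a * M a b * y b = x ⬝ᵥ M *ᵥ y := by
  simp only [dotProduct, mulVec, Finset.mul_sum, mul_assoc]

theorem matrixValue_eq_of_saddle {M : Matrix E F ℝ} {x : E → ℝ} {y : F → ℝ} {v : ℝ}
    (hx : x ∈ stdSimplex ℝ E) (hy : y ∈ stdSimplex ℝ F)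
    (hcol : ∀ b, v ≤ (x ᵥ* M) b) (hrow : ∀ a, (M *ᵥ y) a ≤ v) : matrixValue M = v := by
  have hupper (x' : stdSimplex ℝ E) : ⨅ y' : stdSimplex ℝ F, x'.1 ⬝ᵥ M *ᵥ y'.1 ≤ v := by
    have hbdd : BddBelow (Set.range fun y' : stdSimplex ℝ F => x'.1 ⬝ᵥ M *ᵥ y'.1) :=
      (isCompact_range (by fun_prop)).bddBelow
    exact (ciInf_le hbdd ⟨y, hy⟩).trans (dotProduct_le_of_mem_stdSimplex x'.2 hrow)
  have hlower (y' : stdSimplex ℝ F) : v ≤ x ⬝ᵥ M *ᵥ y'.1 := by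
    rw [dotProduct_mulVec, dotProduct_comm]
    exact le_dotProduct_of_mem_stdSimplex y'.2 hcol
  have : Nonempty (stdSimplex ℝ E) := ⟨⟨x, hx⟩⟩
  have : Nonempty (stdSimplex ℝ F) := ⟨⟨y, hy⟩⟩
  simp only [matrixValue, sum_sum_mul_mul_eq_dotProduct_mulVec]
  have hbdd : BddAbove (Set.range fun x' : stdSimplex ℝ E =>
      ⨅ y' : stdSimplex ℝ F, x'.1 ⬝ᵥ M *ᵥ y'.1) :=
    ⟨v, Set.forall_mem_range.2 hupper⟩
  exact le_antisymm (ciSup_le hupper) ((le_ciInf hlower).trans (le_ciSup hbdd ⟨x, hx⟩))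

end MatrixGame

def reciprocalGame {R A B : Type*} [Ring R] (e : R) (M : A → B → R) :
    Option (A × B) → B ⊕ A → R
  | none, .inl _ => -e
  | none, .inr _ => e
  | some p, .inl b => e ^ 2 * M p.1 b
  | some p, .inr a => 2 * e - e ^ 2 * M a p.2

theorem map_reciprocalGame {R S A B : Type*} [Ring R] [Ring S] (f : R →+* S) (e : R)
    (M : A → B → R) (o : Option (A × B)) (c : B ⊕ A) :
    f (reciprocalGame e M o c) = reciprocalGame (f e) (fun a b => f (M a b)) o c := by
  rcases o with _ | p <;> rcases c with b | a <;> simp [reciprocalGame, map_ofNat]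

section ReciprocalGame

variable {A B : Type} [Fintype A] [Fintype B] {ε v : ℝ} {M : Matrix A B ℝ} {x : A → ℝ}
  {y : B → ℝ}

theorem le_vecMul_reciprocalGame (hε : 0 < ε) (hv : 0 < v) (hx : ∑ a, x a = 1)
    (hy : ∑ b, y b = 1) (hcol : ∀ b, v ≤ (x ᵥ* M) b) (hrow : ∀ a, (M *ᵥ y) a ≤ v)
    (c : B ⊕ A) :
    1 / v ≤ ((fun o : Option (A × B) => o.elim (1 - ε / v) fun p => ε / v * (x p.1 * y p.2))
      ᵥ* reciprocalGame ε⁻¹ M) c := by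
  have hre : ε / v * ε⁻¹ = 1 / v := by field_simp
  have hrev : ε / v * ε⁻¹ ^ 2 * v = ε⁻¹ := by field_simp
  have hr : 0 ≤ ε / v * ε⁻¹ ^ 2 := by positivity
  simp only [vecMul, dotProduct, Fintype.sum_option, Option.elim, reciprocalGame]
  rcases c with b | a
  · have hsum : ∑ p : A × B, ε / v * (x p.1 * y p.2) * (ε⁻¹ ^ 2 * M p.1 b) =
        ε / v * ε⁻¹ ^ 2 * (x ᵥ* M) b := by
      rw [vecMul, ← sum_prod_mul_mul_fst hy, Finset.mul_sum]
      exact Finset.sum_congr rfl fun _ _ => by ring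
    rw [hsum]
    nlinarith [mul_le_mul_of_nonneg_left (hcol b) hr]
  · have hsum : ∑ p : A × B, ε / v * (x p.1 * y p.2) * (2 * ε⁻¹ - ε⁻¹ ^ 2 * M a p.2) =
        ε / v * (2 * ε⁻¹) * ∑ p : A × B, x p.1 * y p.2 -
          ε / v * ε⁻¹ ^ 2 * ∑ p : A × B, x p.1 * y p.2 * M a p.2 := by
      rw [Finset.mul_sum, Finset.mul_sum, ← Finset.sum_sub_distrib]
      exact Finset.sum_congr rfl fun _ _ => by ring
    have hrowa : M a ⬝ᵥ y ≤ v := hrow a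
    rw [hsum, sum_prod_mul_eq_one hx hy, sum_prod_mul_mul_snd hx, dotProduct_comm]
    nlinarith [mul_le_mul_of_nonneg_left hrowa hr]

theorem mulVec_reciprocalGame_le (hε : 0 < ε) (hεv : ε ≤ v) (hx : ∑ a, x a = 1)
    (hy : ∑ b, y b = 1) (hcol : ∀ b, v ≤ (x ᵥ* M) b) (hrow : ∀ a, (M *ᵥ y) a ≤ v)
    (o : Option (A × B)) :
    (reciprocalGame ε⁻¹ M *ᵥ Sum.elim (((1 - ε / v) / 2) • y) ((1 - (1 - ε / v) / 2) • x)) o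
      ≤ 1 / v := by
  have hv : 0 < v := hε.trans_le hεv
  have hr₀ : 0 ≤ ε / v := by positivity
  have hr₁ : ε / v ≤ 1 := (div_le_one hv).2 hεv
  have hre : ε / v * ε⁻¹ = 1 / v := by field_simp
  simp only [mulVec, dotProduct, Fintype.sum_sum_type, reciprocalGame, Sum.elim_inl,
    Sum.elim_inr, Pi.smul_apply, smul_eq_mul]
  rcases o with _ | p
  · rw [← Finset.mul_sum, ← Finset.mul_sum, ← Finset.mul_sum, ← Finset.mul_sum, hy, hx]
    linarith
  · have hrow' : ∑ b, ε⁻¹ ^ 2 * M p.1 b * ((1 - ε / v) / 2 * y b) =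
        (1 - ε / v) / 2 * ε⁻¹ ^ 2 * (M *ᵥ y) p.1 := by
      rw [mulVec, dotProduct, Finset.mul_sum]
      exact Finset.sum_congr rfl fun _ _ => by ring
    have hcol' : ∑ a, (2 * ε⁻¹ - ε⁻¹ ^ 2 * M a p.2) * ((1 - (1 - ε / v) / 2) * x a) =
        (1 + ε / v) / 2 * (2 * ε⁻¹) * ∑ a, x a -
          (1 + ε / v) / 2 * ε⁻¹ ^ 2 * (x ᵥ* M) p.2 := by
      rw [vecMul, dotProduct, Finset.mul_sum, Finset.mul_sum, ← Finset.sum_sub_distrib]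
      exact Finset.sum_congr rfl fun _ _ => by ring
    have hrev : ε / v * ε⁻¹ ^ 2 * v = ε⁻¹ := by field_simp
    have hq : 0 ≤ (1 - ε / v) / 2 * ε⁻¹ ^ 2 := by nlinarith [sq_nonneg ε⁻¹]
    have hq' : 0 ≤ (1 + ε / v) / 2 * ε⁻¹ ^ 2 := by positivity
    rw [hrow', hcol', hx]
    nlinarith [mul_le_mul_of_nonneg_left (hrow p.1) hq, mul_le_mul_of_nonneg_left (hcol p.2) hq']

theorem matrixValue_reciprocalGame [Nonempty A] [Nonempty B] (hε : 0 < ε)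
    (hM : ε ≤ matrixValue M) : matrixValue (reciprocalGame ε⁻¹ M) = 1 / matrixValue M := by
  obtain ⟨x, hx, y, hy, v, hcol, hrow⟩ := M.exists_saddlePoint
  rw [matrixValue_eq_of_saddle hx hy hcol hrow] at hM ⊢
  have hv : 0 < v := hε.trans_le hM
  have hr₀ : 0 ≤ ε / v := by positivity
  have hr₁ : ε / v ≤ 1 := (div_le_one hv).2 hM
  exact matrixValue_eq_of_saddle
    (option_elim_mem_stdSimplex hr₀ hr₁ (mul_mem_stdSimplex_prod hx hy))
    (sum_elim_mem_stdSimplex (by linarith) (by linarith) hy hx)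
    (le_vecMul_reciprocalGame hε hv hx.2 hy.2 hcol hrow)
    (mulVec_reciprocalGame_le hε hM hx.2 hy.2 hcol hrow)

end ReciprocalGame

/-- If `u` is the value function of some polynomial game and `u ≥ ε` everywhere for some
`ε > 0`, then `z ↦ 1 / u z` is also the value function of some polynomial game. -/
theorem InV.one_div (u : ℝ → ℝ) (hu : InV u)
    (hpos : ∃ ε : ℝ, 0 < ε ∧ ∀ z : ℝ, ε ≤ u z) :
    InV (fun z => 1 / u z) := by
  obtain ⟨ε, hε, hεu⟩ := hpos
  obtain ⟨A, B, _, _, _, _, G, hG⟩ := hu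
  refine ⟨Option (A × B), B ⊕ A, inferInstance, inferInstance, inferInstance, inferInstance,
    reciprocalGame (C ε⁻¹) G, fun z => ?_⟩
  have heval : (fun o c => (reciprocalGame (C ε⁻¹) G o c).eval z) =
      reciprocalGame ε⁻¹ fun a b => (G a b).eval z :=
    funext₂ fun o c => by simpa using map_reciprocalGame (evalRingHom z) (C ε⁻¹) G o c
  have hvalue : ε ≤ matrixValue fun a b => (G a b).eval z := hG z ▸ hεu z
  rw [heval, matrixValue_reciprocalGame hε hvalue, ← hG z]
end

section
/- Let û, ŵ : ℝ → ℝ be functions such that on a neighborhood of 0 each is given by a rational function (a quotient of real polynomials with nonvanishing denominator there), and suppose û and ŵ are defined on all of ℝ as continuous piecewise rational functions with û(0) = ŵ(0) = 0. Then there exist a real constant c > 0 and a natural number N such that û(z) ≥ c·z + z^{2N+1} for every z ≤ 0 and ŵ(z) ≤ c·z + z^{2N+1} for every z ≥ 0. -/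
open Polynomial

/-! On `z ≥ 0` the function `ŵ` is bounded in three regimes. Near `0` it is differentiable with
`ŵ 0 = 0`, hence `O(z)`; on a compact range `[δ, M]` it is bounded, hence below `(B / δ) z`; beyond
the last breakpoint it is a rational function `Q / R`, which eventually lies below `z ^ n` for
`n > deg Q`. Enlarging `c` or (for `z ≥ 1`) the exponent keeps the bound, so `ŵ` and the
reflection `z ↦ -û (-z)` can share `c` and `N`; the exponent is odd so that the reflection fixes
`z ^ (2N+1)`. -/

open Filter Set Topology

theorem Polynomial.eventually_eval_div_le_pow (Q R : ℝ[X]) (hR : R ≠ 0) :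
    ∀ᶠ z in atTop, Q.eval z / R.eval z ≤ z ^ (Q.natDegree + 1) := by
  set n := Q.natDegree + 1
  have hQ : Q.degree < (X ^ n * R).degree := by
    rw [degree_mul, degree_X_pow, degree_eq_natDegree hR]
    exact degree_le_natDegree.trans_lt
      (by exact_mod_cast (by omega : Q.natDegree < n + R.natDegree))
  have hdeg : (X ^ n * R - Q).degree = (X ^ n * R).degree := degree_sub_eq_left_of_degree_lt hQ
  have hlc : (X ^ n * R - Q).leadingCoeff = R.leadingCoeff := by
    rw [leadingCoeff_sub_of_degree_lt hQ, leadingCoeff_mul, leadingCoeff_X_pow, one_mul]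
  have htend : Tendsto (fun z => (X ^ n * R - Q).eval z / R.eval z) atTop atTop := by
    refine div_tendsto_atTop_of_degree_gt _ R ?_ hR ?_
    · rw [hdeg, degree_mul, degree_X_pow, degree_eq_natDegree hR]
      exact_mod_cast (by omega : R.natDegree < n + R.natDegree)
    · rw [hlc, div_self (leadingCoeff_ne_zero.mpr hR)]
      exact zero_le_one
  filter_upwards [htend.eventually_ge_atTop 0, eventually_ge_atTop 0] with z hz hz0
  by_cases hRz : R.eval z = 0
  · simpa [hRz] using pow_nonneg hz0 n
  · rw [eval_sub, eval_mul, eval_pow, eval_X, sub_div, mul_div_cancel_right₀ _ hRz] at hz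
    linarith

theorem PiecewiseRational.neg_comp_neg {u : ℝ → ℝ} (hu : PiecewiseRational u) :
    PiecewiseRational (fun z => -u (-z)) := by
  obtain ⟨K, h, Q, R, hmono, h0, hlast, hQR⟩ := hu
  refine ⟨K, fun i => -h i.rev, fun k => -(Q k.rev).comp (-X), fun k => (R k.rev).comp (-X),
    fun i j hij => EReal.neg_lt_neg_iff.mpr (hmono (Fin.rev_lt_rev.mpr hij)),
    by simp [hlast], by simp [h0], fun k z h1 h2 => ?_⟩
  simp only [Fin.rev_castSucc, Fin.rev_succ] at h1 h2
  obtain ⟨hR, hval⟩ := hQR k.rev (-z)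
    (by rw [EReal.coe_neg]; exact EReal.lt_neg_comm.mp h2)
    (by rw [EReal.coe_neg]; exact EReal.neg_lt_comm.mp h1)
  simpa [eval_comp, hval, neg_div] using hR

theorem PiecewiseRational.exists_eventually_eq_div {u : ℝ → ℝ} (hu : PiecewiseRational u) :
    ∃ Q R : ℝ[X], R ≠ 0 ∧ ∀ᶠ z in atTop, u z = Q.eval z / R.eval z := by
  obtain ⟨K, h, Q, R, hmono, -, hlast, hQR⟩ := hu
  have hlt : h (Fin.last K).castSucc < ⊤ := hlast ▸ hmono (Fin.castSucc_lt_last _)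
  obtain ⟨m, hm, -⟩ := EReal.lt_iff_exists_real_btwn.mp hlt
  have hfar : ∀ z : ℝ, m < z → (R (Fin.last K)).eval z ≠ 0 ∧
      u z = (Q (Fin.last K)).eval z / (R (Fin.last K)).eval z := fun z hz =>
    hQR _ z (hm.trans (EReal.coe_lt_coe_iff.mpr hz)) (by simp [hlast])
  refine ⟨Q (Fin.last K), R (Fin.last K), fun hR => ?_, ?_⟩
  · simpa [hR] using (hfar (m + 1) (lt_add_one m)).1
  · filter_upwards [eventually_gt_atTop m] with z hz using (hfar z hz).2

theorem PiecewiseRational.exists_eventually_le_pow {u : ℝ → ℝ} (hu : PiecewiseRational u) :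
    ∃ n : ℕ, ∀ᶠ z in atTop, u z ≤ z ^ n := by
  obtain ⟨Q, R, hR, hQR⟩ := hu.exists_eventually_eq_div
  exact ⟨_, by filter_upwards [hQR, Q.eventually_eval_div_le_pow R hR] with z hz hle
    using hz ▸ hle⟩

theorem differentiableAt_zero_of_eq_div {u : ℝ → ℝ} {P R : ℝ[X]} {δ : ℝ} (hδ : 0 < δ)
    (h : ∀ z : ℝ, |z| < δ → R.eval z ≠ 0 ∧ u z = P.eval z / R.eval z) :
    DifferentiableAt ℝ u 0 := by
  have heq : u =ᶠ[𝓝 0] fun z => P.eval z / R.eval z := by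
    filter_upwards [Metric.ball_mem_nhds 0 hδ] with z hz
    exact (h z (by simpa using hz)).2
  exact (P.differentiableAt.div R.differentiableAt (h 0 (by simpa using hδ)).1).congr_of_eventuallyEq
    heq

theorem exists_le_mul_on_Icc {w : ℝ → ℝ} (hcont : Continuous w) (h0 : w 0 = 0)
    (hd : DifferentiableAt ℝ w 0) (M : ℝ) : ∃ c : ℝ, ∀ z ∈ Icc 0 M, w z ≤ c * z := by
  obtain ⟨C, hC⟩ := hd.isBigO_sub.bound
  obtain ⟨δ, hδ, hnear⟩ := Metric.eventually_nhds_iff.mp hC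
  obtain ⟨B, hB⟩ := isCompact_Icc.exists_bound_of_continuousOn (hcont.continuousOn (s := Icc 0 M))
  refine ⟨max C (B / δ), fun z hz => ?_⟩
  have hz0 : 0 ≤ z := hz.1
  rcases lt_or_ge z δ with hzδ | hzδ
  · have hCz : |w z| ≤ C * z := by
      simpa [h0, abs_of_nonneg hz0] using hnear (y := z) (by simpa [abs_of_nonneg hz0] using hzδ)
    calc w z ≤ |w z| := le_abs_self _
      _ ≤ C * z := hCz
      _ ≤ max C (B / δ) * z := by gcongr; exact le_max_left _ _
  · have hBz : |w z| ≤ B := hB z hz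
    have hB0 : 0 ≤ B / δ := div_nonneg ((abs_nonneg _).trans hBz) hδ.le
    calc w z ≤ B / δ * δ := by rw [div_mul_cancel₀ _ hδ.ne']; exact (le_abs_self _).trans hBz
      _ ≤ B / δ * z := by gcongr
      _ ≤ max C (B / δ) * z := by gcongr; exact le_max_right _ _

theorem exists_le_mul_add_pow {w : ℝ → ℝ} {n : ℕ} (hcont : Continuous w) (h0 : w 0 = 0)
    (hd : DifferentiableAt ℝ w 0) (hfar : ∀ᶠ z in atTop, w z ≤ z ^ n) :
    ∃ c₀ > 0, ∀ c ≥ c₀, ∀ m ≥ n, ∀ z ≥ 0, w z ≤ c * z + z ^ m := by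
  obtain ⟨M, hM⟩ := eventually_atTop.mp hfar
  obtain ⟨c₁, hc₁⟩ := exists_le_mul_on_Icc hcont h0 hd (max M 1)
  refine ⟨max c₁ 1, by positivity, fun c hc m hm z hz => ?_⟩
  have hc0 : 0 ≤ c := by linarith [le_max_right c₁ 1]
  rcases le_or_gt z (max M 1) with hzM | hzM
  · have hpow : 0 ≤ z ^ m := pow_nonneg hz m
    calc w z ≤ c₁ * z := hc₁ z ⟨hz, hzM⟩
      _ ≤ c * z := by gcongr; exact (le_max_left _ _).trans hc
      _ ≤ c * z + z ^ m := le_add_of_nonneg_right hpow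
  · calc w z ≤ z ^ n := hM z (le_of_max_le_left hzM.le)
      _ ≤ z ^ m := pow_le_pow_right₀ (le_of_max_le_right hzM.le) hm
      _ ≤ c * z + z ^ m := le_add_of_nonneg_left (mul_nonneg hc0 hz)

/-- If `û` and `ŵ` are continuous piecewise rational functions on `ℝ`, each given by a
rational function on a neighborhood of `0`, with `û 0 = ŵ 0 = 0`, then there exist `c > 0`
and `N ∈ ℕ` with `û z ≥ c * z + z ^ (2 * N + 1)` for all `z ≤ 0` and
`ŵ z ≤ c * z + z ^ (2 * N + 1)` for all `z ≥ 0`. -/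
theorem exists_separating_odd_polynomial (u w : ℝ → ℝ)
    (hucont : Continuous u) (hupr : PiecewiseRational u)
    (hwcont : Continuous w) (hwpr : PiecewiseRational w)
    (hu0 : u 0 = 0) (hw0 : w 0 = 0)
    (huloc : ∃ (P R : Polynomial ℝ) (δ : ℝ), 0 < δ ∧
      ∀ z : ℝ, |z| < δ → R.eval z ≠ 0 ∧ u z = P.eval z / R.eval z)
    (hwloc : ∃ (P R : Polynomial ℝ) (δ : ℝ), 0 < δ ∧
      ∀ z : ℝ, |z| < δ → R.eval z ≠ 0 ∧ w z = P.eval z / R.eval z) :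
    ∃ (c : ℝ) (N : ℕ), 0 < c ∧
      (∀ z : ℝ, z ≤ 0 → c * z + z ^ (2 * N + 1) ≤ u z) ∧
      (∀ z : ℝ, 0 ≤ z → w z ≤ c * z + z ^ (2 * N + 1)) := by
  obtain ⟨Pu, Ru, δu, hδu, hu⟩ := huloc
  obtain ⟨Pw, Rw, δw, hδw, hw⟩ := hwloc
  have hud : DifferentiableAt ℝ (fun z => -u (-z)) 0 :=
    (differentiableAt_comp_neg.mpr (by simpa using differentiableAt_zero_of_eq_div hδu hu)).neg
  obtain ⟨nu, hnu⟩ := hupr.neg_comp_neg.exists_eventually_le_pow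
  obtain ⟨nw, hnw⟩ := hwpr.exists_eventually_le_pow
  obtain ⟨cu, hcu, hu_le⟩ :=
    exists_le_mul_add_pow (w := fun z => -u (-z)) (hucont.comp continuous_neg).neg
      (by simp [hu0]) hud hnu
  obtain ⟨cw, -, hw_le⟩ :=
    exists_le_mul_add_pow hwcont hw0 (differentiableAt_zero_of_eq_div hδw hw) hnw
  refine ⟨max cu cw, max nu nw, lt_max_of_lt_left hcu, fun z hz => ?_, fun z hz =>
    hw_le (max cu cw) (le_max_right _ _) _ (by omega) z hz⟩
  have h := hu_le (max cu cw) (le_max_left _ _) (2 * max nu nw + 1) (by omega) (-z)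
    (neg_nonneg.mpr hz)
  rw [Odd.neg_pow ⟨max nu nw, rfl⟩, neg_neg] at h
  linarith
end

section
/- Let u, w : ℝ → ℝ be continuous piecewise rational functions and z₀ ∈ ℝ with u(z₀) = w(z₀). Then there exist real polynomials P and Q such that: u(z) ≥ P(z) for every z ≤ z₀; u(z) ≤ P(z) and w(z) ≤ P(z) for every z ≥ z₀; u(z) ≤ Q(z) and w(z) ≤ Q(z) for every z ≤ z₀; and w(z) ≥ Q(z) for every z ≥ z₀. Consequently, the function v defined by v(z) = u(z) for z ≤ z₀ and v(z) = w(z) for z > z₀ satisfies v = min{max{u, P}, max{w, Q}} pointwise on ℝ. -/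
open Polynomial

/-!
Near `z₀`, on either side `u` agrees with a rational function that tends to `u z₀`; a meromorphic
function with a one-sided limit has that limit two-sidedly, so `u z - u z₀` has positive order and
is `O(z - z₀)`. At `±∞` the end pieces of `u` grow at most polynomially, and continuity bounds `u`
in between. Hence `|u z - u z₀| ≤ E(z) |z - z₀|` for a nonnegative polynomial `E`, and likewise
for `w`; with `c = u z₀ = w z₀`, the polynomials `P = c + (z - z₀) E` and `Q = c - (z - z₀) E`
do the job.
-/

open Filter Topology Asymptotics

section Meromorphic

variable {𝕜 E : Type*} [NontriviallyNormedField 𝕜] [NormedAddCommGroup E] [NormedSpace 𝕜 E]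
  {f : 𝕜 → E} {x : 𝕜} {c : E}

theorem MeromorphicAt.tendsto_nhdsNE_of_tendsto {l : Filter 𝕜} [l.NeBot] (hf : MeromorphicAt f x)
    (hl : l ≤ 𝓝[≠] x) (h : Tendsto f l (𝓝 c)) : Tendsto f (𝓝[≠] x) (𝓝 c) := by
  have hord : 0 ≤ meromorphicOrderAt f x := by
    by_contra! hneg
    have hinf := (tendsto_cobounded_of_meromorphicOrderAt_neg hneg).mono_left hl
    rw [← tendsto_norm_atTop_iff_cobounded] at hinf
    exact not_tendsto_atTop_of_tendsto_nhds h.norm hinf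
  obtain ⟨d, hd⟩ := tendsto_nhds_of_meromorphicOrderAt_nonneg hf hord
  rwa [tendsto_nhds_unique h (hd.mono_left hl)]

theorem MeromorphicAt.isBigO_sub_of_tendsto (hf : MeromorphicAt f x)
    (h : Tendsto f (𝓝[≠] x) (𝓝 c)) : (fun z ↦ f z - c) =O[𝓝[≠] x] fun z ↦ z - x := by
  have hg : MeromorphicAt (fun z ↦ f z - c) x := hf.sub (.const c x)
  have hpos : 0 < meromorphicOrderAt (fun z ↦ f z - c) x :=
    (tendsto_zero_iff_meromorphicOrderAt_pos hg).1 (by simpa using h.sub_const c)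
  have hinv : MeromorphicAt (fun z : 𝕜 ↦ (z - x)⁻¹) x := ((MeromorphicAt.id x).sub (.const x x)).inv
  -- dividing `f - c`, which vanishes at `x`, by `z - x` leaves a function with a finite limit
  have hquot : 0 ≤ meromorphicOrderAt (fun z ↦ (z - x)⁻¹ • (f z - c)) x := by
    rw [fun_meromorphicOrderAt_smul hinv hg, fun_meromorphicOrderAt_inv,
      meromorphicOrderAt_id_sub_const]
    cases hn : meromorphicOrderAt (fun z ↦ f z - c) x with
    | top => simp
    | coe n =>
      rw [hn] at hpos
      rw [show (-1 + n : WithTop ℤ) = ((-1 + n : ℤ) : WithTop ℤ) from rfl]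
      norm_cast at hpos ⊢
      omega
  obtain ⟨d, hd⟩ := tendsto_nhds_of_meromorphicOrderAt_nonneg (hinv.smul hg) hquot
  obtain ⟨C, hC⟩ := (hd.isBigO_one ℝ).bound
  refine IsBigO.of_bound C ?_
  filter_upwards [hC, self_mem_nhdsWithin] with z hz hzx
  calc ‖f z - c‖ = ‖z - x‖ * ‖(z - x)⁻¹ • (f z - c)‖ := by
        rw [norm_smul, norm_inv, mul_inv_cancel_left₀ (norm_ne_zero_iff.2 (sub_ne_zero.2 hzx))]
    _ ≤ ‖z - x‖ * (C * ‖(1 : ℝ)‖) := by gcongr; exact hz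
    _ = C * ‖z - x‖ := by rw [norm_one]; ring

end Meromorphic

section OneSided

variable {α : Type*} [LinearOrder α] [TopologicalSpace α] [OrderTopology α]

theorem eventually_gt_or_eventually_lt_nhdsGT (x t : α) :
    (∀ᶠ z in 𝓝[>] x, t < z) ∨ ∀ᶠ z in 𝓝[>] x, z < t := by
  rcases le_or_gt t x with htx | hxt
  · exact .inl (eventually_nhdsWithin_of_forall fun _ hz ↦ htx.trans_lt hz)
  · exact .inr (eventually_nhdsWithin_of_eventually_nhds (eventually_lt_nhds hxt))

theorem eventually_gt_or_eventually_lt_nhdsLT (x t : α) :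
    (∀ᶠ z in 𝓝[<] x, t < z) ∨ ∀ᶠ z in 𝓝[<] x, z < t := by
  rcases lt_or_ge t x with htx | hxt
  · exact .inl (eventually_nhdsWithin_of_eventually_nhds (eventually_gt_nhds htx))
  · exact .inr (eventually_nhdsWithin_of_forall fun _ hz ↦ (Set.mem_Iio.1 hz).trans_le hxt)

end OneSided

theorem PiecewiseRational.exists_eventuallyEq_div {u : ℝ → ℝ} (hu : PiecewiseRational u)
    {l : Filter ℝ} [l.NeBot] (hl : ∀ t : ℝ, (∀ᶠ z in l, t < z) ∨ ∀ᶠ z in l, z < t) :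
    ∃ Q R : ℝ[X], R ≠ 0 ∧ u =ᶠ[l] fun z ↦ Q.eval z / R.eval z := by
  classical
  obtain ⟨K, h, Q, R, -, hbot, htop, hpiece⟩ := hu
  have hside (t : EReal) : (∀ᶠ z : ℝ in l, t < z) ∨ ∀ᶠ z : ℝ in l, (z : EReal) < t := by
    induction t using EReal.rec with
    | bot => exact .inl (.of_forall EReal.bot_lt_coe)
    | top => exact .inr (.of_forall EReal.coe_lt_top)
    | coe t => simpa only [EReal.coe_lt_coe_iff] using hl t
  -- `j` is the last partition point that `l` eventually lies to the right of
  let S := Finset.univ.filter fun j ↦ ∀ᶠ z : ℝ in l, h j < z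
  have h0 : 0 ∈ S := by simp [S, hbot]
  let j := S.max' ⟨0, h0⟩
  have hj : ∀ᶠ z : ℝ in l, h j < z := (Finset.mem_filter.1 (S.max'_mem _)).2
  obtain ⟨k, hk⟩ : ∃ k : Fin (K + 1), k.castSucc = j := by
    refine Fin.exists_castSucc_eq.2 fun hjl ↦ ?_
    rw [hjl, htop] at hj
    simpa using hj.exists
  have hsucc : ∀ᶠ z : ℝ in l, (z : EReal) < h k.succ := by
    refine (hside _).resolve_left fun hs ↦ ?_
    have : k.succ ≤ j := S.le_max' _ (by simp [S, hs])
    exact (hk ▸ Fin.castSucc_lt_succ (i := k)).not_ge this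
  have hev := (hj.and hsucc).mono fun z hz ↦ hpiece k z (hk ▸ hz.1) hz.2
  obtain ⟨z, hz⟩ := hev.exists
  exact ⟨Q k, R k, fun hR ↦ hz.1 (by simp [hR]), hev.mono fun z hz ↦ hz.2⟩

theorem PiecewiseRational.isBigO_sub_of_le_nhdsNE {u : ℝ → ℝ} {x : ℝ} (hc : ContinuousAt u x)
    (hu : PiecewiseRational u) {l : Filter ℝ} [l.NeBot]
    (hside : ∀ t : ℝ, (∀ᶠ z in l, t < z) ∨ ∀ᶠ z in l, z < t) (hl : l ≤ 𝓝[≠] x) :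
    (fun z ↦ u z - u x) =O[l] fun z ↦ z - x := by
  obtain ⟨Q, R, -, hQR⟩ := hu.exists_eventuallyEq_div hside
  have hmer : MeromorphicAt (fun z ↦ Q.eval z / R.eval z) x :=
    (AnalyticOnNhd.eval_polynomial Q x trivial).meromorphicAt.div
      (AnalyticOnNhd.eval_polynomial R x trivial).meromorphicAt
  have hlim : Tendsto (fun z ↦ Q.eval z / R.eval z) l (𝓝 (u x)) :=
    (hc.tendsto.mono_left (hl.trans nhdsWithin_le_nhds)).congr' hQR
  have hO := (hmer.isBigO_sub_of_tendsto (hmer.tendsto_nhdsNE_of_tendsto hl hlim)).mono hl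
  exact hO.congr' (hQR.mono fun z hz ↦ by simp only [hz]) .rfl

theorem PiecewiseRational.isBigO_sub {u : ℝ → ℝ} {x : ℝ} (hc : ContinuousAt u x)
    (hu : PiecewiseRational u) : (fun z ↦ u z - u x) =O[𝓝 x] fun z ↦ z - x := by
  rw [← nhdsNE_sup_pure, ← nhdsLT_sup_nhdsGT]
  refine ((hu.isBigO_sub_of_le_nhdsNE hc (eventually_gt_or_eventually_lt_nhdsLT x)
    (nhdsLT_le_nhdsNE x)).sup (hu.isBigO_sub_of_le_nhdsNE hc
    (eventually_gt_or_eventually_lt_nhdsGT x) (nhdsGT_le_nhdsNE x))).sup ?_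
  exact isBigO_pure.2 fun _ ↦ sub_self _

theorem Polynomial.exists_pos_le_abs_eval_cocompact {R : ℝ[X]} (hR : R ≠ 0) :
    ∃ c > 0, ∀ᶠ z in cocompact ℝ, c ≤ |R.eval z| := by
  rcases (zero_le_degree_iff.2 hR).eq_or_lt with hdeg | hdeg
  · rw [eq_C_of_degree_eq_zero hdeg.symm] at hR ⊢
    exact ⟨_, abs_pos.2 (C_ne_zero.1 hR), .of_forall fun z ↦ by rw [eval_C]⟩
  · refine ⟨1, one_pos, ?_⟩
    simpa only [Real.norm_eq_abs] using
      (R.tendsto_norm_atTop hdeg tendsto_norm_cocompact_atTop).eventually_ge_atTop 1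

theorem Polynomial.exists_abs_div_le_eval_cocompact (Q : ℝ[X]) {R : ℝ[X]} (hR : R ≠ 0) :
    ∃ B : ℝ[X], (∀ z, 0 ≤ B.eval z) ∧ ∀ᶠ z in cocompact ℝ, |Q.eval z / R.eval z| ≤ B.eval z := by
  obtain ⟨c, hc, hRc⟩ := exists_pos_le_abs_eval_cocompact hR
  have hB (z : ℝ) : (C c⁻¹ * (1 + Q ^ 2)).eval z = (1 + Q.eval z ^ 2) / c := by
    simp [div_eq_inv_mul]
  refine ⟨C c⁻¹ * (1 + Q ^ 2), fun z ↦ by rw [hB]; positivity, ?_⟩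
  filter_upwards [hRc] with z hz
  rw [hB, abs_div]
  have hQ : |Q.eval z| ≤ 1 + Q.eval z ^ 2 := by
    nlinarith [sq_abs (Q.eval z), sq_nonneg (|Q.eval z| - 1)]
  calc |Q.eval z| / |R.eval z| ≤ |Q.eval z| / c := by gcongr
    _ ≤ (1 + Q.eval z ^ 2) / c := by gcongr

theorem Continuous.exists_le_add_of_eventually_le_cocompact {X : Type*} [TopologicalSpace X]
    {f g : X → ℝ} (hf : Continuous f) (hg : ∀ x, 0 ≤ g x) (h : f ≤ᶠ[cocompact X] g) :
    ∃ M, ∀ x, f x ≤ g x + M := by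
  obtain ⟨K, hK, hKc⟩ := mem_cocompact.1 h
  obtain ⟨M, hM⟩ := hK.exists_bound_of_continuousOn hf.continuousOn
  refine ⟨max M 0, fun x ↦ ?_⟩
  by_cases hx : x ∈ K
  · linarith [le_abs_self (f x), hM x hx, hg x, le_max_left M 0, Real.norm_eq_abs (f x)]
  · linarith [show f x ≤ g x from hKc hx, le_max_right M 0]

theorem PiecewiseRational.exists_abs_le_eval {u : ℝ → ℝ} (hc : Continuous u)
    (hu : PiecewiseRational u) : ∃ B : ℝ[X], ∀ z, |u z| ≤ B.eval z := by
  obtain ⟨Q₀, R₀, hR₀, hu₀⟩ :=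
    hu.exists_eventuallyEq_div (l := atBot) fun t ↦ .inr (eventually_lt_atBot t)
  obtain ⟨Q₁, R₁, hR₁, hu₁⟩ :=
    hu.exists_eventuallyEq_div (l := atTop) fun t ↦ .inl (eventually_gt_atTop t)
  obtain ⟨B₀, hB₀, hB₀u⟩ := Q₀.exists_abs_div_le_eval_cocompact hR₀
  obtain ⟨B₁, hB₁, hB₁u⟩ := Q₁.exists_abs_div_le_eval_cocompact hR₁
  have hev : (fun z ↦ |u z|) ≤ᶠ[cocompact ℝ] fun z ↦ (B₀ + B₁).eval z := by
    rw [cocompact_eq_atBot_atTop]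
    refine eventually_sup.2 ⟨?_, ?_⟩
    · filter_upwards [hu₀, atBot_le_cocompact hB₀u] with z hz hB
      rw [eval_add, hz]
      linarith [hB₁ z]
    · filter_upwards [hu₁, atTop_le_cocompact hB₁u] with z hz hB
      rw [eval_add, hz]
      linarith [hB₀ z]
  obtain ⟨M, hM⟩ := hc.abs.exists_le_add_of_eventually_le_cocompact
    (fun z ↦ by simpa using add_nonneg (hB₀ z) (hB₁ z)) hev
  exact ⟨B₀ + B₁ + C M, fun z ↦ by simpa using hM z⟩

theorem exists_abs_le_eval_mul_abs_sub {f : ℝ → ℝ} {x : ℝ} {B : ℝ[X]}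
    (hB : ∀ z, |f z| ≤ B.eval z) (hf : f =O[𝓝 x] fun z ↦ z - x) :
    ∃ E : ℝ[X], (∀ z, 0 ≤ E.eval z) ∧ ∀ z, |f z| ≤ E.eval z * |z - x| := by
  obtain ⟨L, hL, hLf⟩ := hf.exists_pos
  obtain ⟨δ, hδ, hball⟩ := Metric.eventually_nhds_iff.1 hLf.bound
  have hB0 (z : ℝ) : 0 ≤ B.eval z := (abs_nonneg _).trans (hB z)
  have hE (z : ℝ) : (C L + C δ⁻¹ * B).eval z = L + δ⁻¹ * B.eval z := by simp
  refine ⟨C L + C δ⁻¹ * B, fun z ↦ by rw [hE]; have := hB0 z; positivity, fun z ↦ ?_⟩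
  rw [hE]
  have := hB0 z
  rcases lt_or_ge (dist z x) δ with hz | hz
  · have hfz : |f z| ≤ L * |z - x| := by simpa only [Real.norm_eq_abs] using hball hz
    have : 0 ≤ δ⁻¹ * B.eval z * |z - x| := by positivity
    linarith
  · rw [Real.dist_eq] at hz
    calc |f z| ≤ B.eval z := hB z
      _ = δ⁻¹ * B.eval z * δ := by field_simp
      _ ≤ δ⁻¹ * B.eval z * |z - x| := by gcongr
      _ ≤ (L + δ⁻¹ * B.eval z) * |z - x| := by gcongr; linarith

theorem PiecewiseRational.exists_abs_sub_le_eval_mul_abs_sub {u : ℝ → ℝ} (hc : Continuous u)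
    (hu : PiecewiseRational u) (x : ℝ) :
    ∃ E : ℝ[X], (∀ z, 0 ≤ E.eval z) ∧ ∀ z, |u z - u x| ≤ E.eval z * |z - x| := by
  obtain ⟨B, hB⟩ := hu.exists_abs_le_eval hc
  refine exists_abs_le_eval_mul_abs_sub (B := B + C |u x|) (fun z ↦ ?_)
    (hu.isBigO_sub hc.continuousAt)
  simpa using (abs_sub (u z) (u x)).trans (add_le_add_left (hB z) _)

theorem mem_Icc_of_abs_sub_le_of_nonpos {a c d e : ℝ} (h : |a - c| ≤ e * |d|) (hd : d ≤ 0) :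
    a ∈ Set.Icc (c + d * e) (c - d * e) := by
  rw [abs_of_nonpos hd, abs_sub_le_iff] at h
  constructor <;> linarith

theorem mem_Icc_of_abs_sub_le_of_nonneg {a c d e : ℝ} (h : |a - c| ≤ e * |d|) (hd : 0 ≤ d) :
    a ∈ Set.Icc (c - d * e) (c + d * e) := by
  rw [abs_of_nonneg hd, abs_sub_le_iff] at h
  constructor <;> linarith

/-- Given continuous piecewise rational `u, w : ℝ → ℝ` with `u z₀ = w z₀`, there are
polynomials `P`, `Q` such that `P ≤ u` on `(-∞, z₀]`, `u ≤ P` and `w ≤ P` on `[z₀, ∞)`,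
`u ≤ Q` and `w ≤ Q` on `(-∞, z₀]`, `Q ≤ w` on `[z₀, ∞)`; consequently the function that
equals `u` on `(-∞, z₀]` and `w` on `(z₀, ∞)` is `min (max u P) (max w Q)` pointwise. -/
theorem exists_sandwich_polynomials (u w : ℝ → ℝ)
    (hucont : Continuous u) (hupr : PiecewiseRational u)
    (hwcont : Continuous w) (hwpr : PiecewiseRational w)
    (z₀ : ℝ) (h₀ : u z₀ = w z₀) :
    ∃ P Q : Polynomial ℝ,
      (∀ z : ℝ, z ≤ z₀ → P.eval z ≤ u z) ∧
      (∀ z : ℝ, z₀ ≤ z → u z ≤ P.eval z ∧ w z ≤ P.eval z) ∧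
      (∀ z : ℝ, z ≤ z₀ → u z ≤ Q.eval z ∧ w z ≤ Q.eval z) ∧
      (∀ z : ℝ, z₀ ≤ z → Q.eval z ≤ w z) ∧
      (∀ z : ℝ, (if z ≤ z₀ then u z else w z) =
        min (max (u z) (P.eval z)) (max (w z) (Q.eval z))) := by
  obtain ⟨Eu, hEu0, hEu⟩ := hupr.exists_abs_sub_le_eval_mul_abs_sub hucont z₀
  obtain ⟨Ew, hEw0, hEw⟩ := hwpr.exists_abs_sub_le_eval_mul_abs_sub hwcont z₀
  set c := u z₀
  set E := Eu + Ew
  have hu (z : ℝ) : |u z - c| ≤ E.eval z * |z - z₀| :=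
    (hEu z).trans (by gcongr; simpa [E] using hEw0 z)
  have hw (z : ℝ) : |w z - c| ≤ E.eval z * |z - z₀| :=
    h₀ ▸ (hEw z).trans (by gcongr; simpa [E] using hEu0 z)
  refine ⟨C c + (X - C z₀) * E, C c - (X - C z₀) * E, ?_⟩
  simp only [eval_add, eval_sub, eval_mul, eval_C, eval_X]
  have below (z : ℝ) (hz : z ≤ z₀) := And.intro
    (mem_Icc_of_abs_sub_le_of_nonpos (hu z) (sub_nonpos.2 hz))
    (mem_Icc_of_abs_sub_le_of_nonpos (hw z) (sub_nonpos.2 hz))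
  have above (z : ℝ) (hz : z₀ ≤ z) := And.intro
    (mem_Icc_of_abs_sub_le_of_nonneg (hu z) (sub_nonneg.2 hz))
    (mem_Icc_of_abs_sub_le_of_nonneg (hw z) (sub_nonneg.2 hz))
  refine ⟨fun z hz ↦ (below z hz).1.1, fun z hz ↦ ⟨(above z hz).1.2, (above z hz).2.2⟩,
    fun z hz ↦ ⟨(below z hz).1.2, (below z hz).2.2⟩, fun z hz ↦ (above z hz).2.1, fun z ↦ ?_⟩
  split_ifs with hz
  · rw [max_eq_left (below z hz).1.1, min_eq_left ((below z hz).1.2.trans (le_max_right _ _))]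
  · obtain ⟨-, hwq, hwp⟩ := above z (le_of_not_ge hz)
    rw [max_eq_left hwq, min_eq_right (hwp.trans (le_max_right _ _))]
end

section
/- Let I = [α, β] be a compact interval in ℝ with α < β. For every natural number k, there exists a linear game (a polynomial game in which every payoff entry is a polynomial of degree at most 1 in Z) whose value function agrees with z ↦ z^k on I. -/
open Polynomial

/-!
If each player of a matrix game has a mixed strategy that makes the expected payoff equal to
`v` whatever the opponent plays, the value of the game is `v`. Such games can multiply their
value by a bounded parameter `u` at the cost of one extra binary choice per player: the payoff
`s i * u + t j * G a b - s i * t j`, where Player 1 picks `i` with `s i = ±m` and Player 2 picks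
`j` with `t j = ±R`, stays equalized with value `v * u`. Taking `u = z` keeps the payoff of degree
at most one in `Z`, so starting from the `1 × 1` game with payoff `1` we reach `z ^ k` on any
bounded set, with the bounds `m` and `R` chosen once and for all from the bounds on `z ^ k` and `z`.
-/

theorem ciSup_ciInf_eq_of_isSaddle {X Y : Type*} {F : X → Y → ℝ} {v : ℝ} {x₀ : X} {y₀ : Y}
    (hbdd : ∀ x, BddBelow (Set.range (F x))) (hx₀ : ∀ y, F x₀ y = v) (hy₀ : ∀ x, F x y₀ = v) :
    ⨆ x, ⨅ y, F x y = v := by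
  have : Nonempty X := ⟨x₀⟩
  have : Nonempty Y := ⟨y₀⟩
  have hle : ∀ x, ⨅ y, F x y ≤ v := fun x => (ciInf_le (hbdd x) y₀).trans_eq (hy₀ x)
  refine le_antisymm (ciSup_le hle) ?_
  calc v = ⨅ y, F x₀ y := by simp only [hx₀, ciInf_const]
    _ ≤ ⨆ x, ⨅ y, F x y := le_ciSup ⟨v, Set.forall_mem_range.2 hle⟩ x₀

section MatrixGame

variable {A B I J : Type} [Fintype A] [Fintype B] [Fintype I] [Fintype J]

def HasEqualizingStrategies (G : A → B → ℝ) (v : ℝ) : Prop :=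
  (∃ x ∈ stdSimplex ℝ A, ∀ b, ∑ a, x a * G a b = v) ∧
  (∃ y ∈ stdSimplex ℝ B, ∀ a, ∑ b, G a b * y b = v)

theorem matrixValue_eq_of_hasEqualizingStrategies {G : A → B → ℝ} {v : ℝ}
    (h : HasEqualizingStrategies G v) : matrixValue G = v := by
  obtain ⟨⟨x₀, hx₀, hx⟩, ⟨y₀, hy₀, hy⟩⟩ := h
  refine ciSup_ciInf_eq_of_isSaddle (x₀ := ⟨x₀, hx₀⟩) (y₀ := ⟨y₀, hy₀⟩)
    (fun x => (isCompact_range <| continuous_finsetSum _ fun a _ => continuous_finsetSum _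
      fun b _ => continuous_const.mul ((continuous_apply b).comp continuous_subtype_val)).bddBelow)
    (fun y => ?_) (fun x => ?_)
  · rw [Finset.sum_comm]
    simp only [← Finset.sum_mul, hx, ← Finset.mul_sum, y.2.2, mul_one]
  · simp only [mul_assoc, ← Finset.mul_sum, hy, ← Finset.sum_mul, x.2.2, one_mul]

theorem hasEqualizingStrategies_const (c : ℝ) :
    HasEqualizingStrategies (fun (_ : Unit) (_ : Unit) => c) c :=
  ⟨⟨1, ⟨fun _ => zero_le_one, by simp⟩, fun _ => by simp⟩,
    ⟨1, ⟨fun _ => zero_le_one, by simp⟩, fun _ => by simp⟩⟩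

/-- Player 1 mixes `i` so that `s` averages to `v`, Player 2 mixes `j` so that `t` averages to
`u`; in either expectation the term `s i * t j` cancels one of the other two. -/
theorem HasEqualizingStrategies.scale {G : A → B → ℝ} {v : ℝ} (hG : HasEqualizingStrategies G v)
    {s : I → ℝ} {t : J → ℝ} {u : ℝ} (hs : ∃ ξ ∈ stdSimplex ℝ I, ∑ i, ξ i * s i = v)
    (ht : ∃ η ∈ stdSimplex ℝ J, ∑ j, η j * t j = u) :
    HasEqualizingStrategies
      (fun (p : A × I) (q : B × J) => s p.2 * u + t q.2 * G p.1 q.1 - s p.2 * t q.2) (v * u) := by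
  obtain ⟨⟨x, hx, hxG⟩, ⟨y, hy, hGy⟩⟩ := hG
  obtain ⟨ξ, hξ, hξs⟩ := hs
  obtain ⟨η, hη, hηt⟩ := ht
  constructor
  · refine ⟨fun p => x p.1 * ξ p.2, ⟨fun p => mul_nonneg (hx.1 _) (hξ.1 _), ?_⟩, fun q => ?_⟩
    · rw [Fintype.sum_prod_type, ← Finset.sum_mul_sum, hx.2, hξ.2, one_mul]
    · calc ∑ p : A × I, x p.1 * ξ p.2 * (s p.2 * u + t q.2 * G p.1 q.1 - s p.2 * t q.2)
          = (∑ a, x a) * (∑ i, ξ i * s i) * (u - t q.2)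
              + (∑ a, x a * G a q.1) * (∑ i, ξ i) * t q.2 := by
            simp only [Finset.sum_mul_sum]
            simp only [Finset.sum_mul, Fintype.sum_prod_type, ← Finset.sum_add_distrib]
            exact Finset.sum_congr rfl fun a _ => Finset.sum_congr rfl fun i _ => by ring
        _ = v * u := by rw [hx.2, hξs, hxG, hξ.2]; ring
  · refine ⟨fun q => y q.1 * η q.2, ⟨fun q => mul_nonneg (hy.1 _) (hη.1 _), ?_⟩, fun p => ?_⟩
    · rw [Fintype.sum_prod_type, ← Finset.sum_mul_sum, hy.2, hη.2, one_mul]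
    · calc ∑ q : B × J, (s p.2 * u + t q.2 * G p.1 q.1 - s p.2 * t q.2) * (y q.1 * η q.2)
          = (∑ b, y b) * (∑ j, η j) * (s p.2 * u) - (∑ b, y b) * (∑ j, η j * t j) * s p.2
              + (∑ b, G p.1 b * y b) * ∑ j, η j * t j := by
            simp only [Finset.sum_mul_sum]
            simp only [Finset.sum_mul, Fintype.sum_prod_type, ← Finset.sum_add_distrib,
              ← Finset.sum_sub_distrib]
            exact Finset.sum_congr rfl fun b _ => Finset.sum_congr rfl fun j _ => by ring
        _ = v * u := by rw [hy.2, hη.2, hηt, hGy]; ring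

end MatrixGame

def IsLinearGameValueOn (S : Set ℝ) (f : ℝ → ℝ) : Prop :=
  ∃ (A B : Type) (_ : Fintype A) (_ : Fintype B), Nonempty A ∧ Nonempty B ∧
    ∃ G : A → B → ℝ[X], (∀ a b, (G a b).degree ≤ 1) ∧
      ∀ z ∈ S, HasEqualizingStrategies (fun a b => (G a b).eval z) (f z)

theorem isLinearGameValueOn_const (S : Set ℝ) (c : ℝ) : IsLinearGameValueOn S fun _ => c :=
  ⟨Unit, Unit, inferInstance, inferInstance, inferInstance, inferInstance, fun _ _ => C c,
    fun _ _ => degree_C_le.trans zero_le_one,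
    fun _ _ => by simpa only [eval_C] using hasEqualizingStrategies_const c⟩

theorem exists_mem_stdSimplex_sum_mul_eq {m v : ℝ} (h : |v| ≤ m) :
    ∃ ξ ∈ stdSimplex ℝ (Fin 2), ∑ i, ξ i * ![-m, m] i = v := by
  have hv : v ∈ segment ℝ (-m) m := by
    rw [segment_eq_Icc (by linarith [abs_nonneg v])]
    exact abs_le.1 h
  obtain ⟨a, b, ha, hb, hab, rfl⟩ := hv
  refine ⟨![a, b], ⟨Fin.forall_fin_two.2 ⟨ha, hb⟩, by simpa [Fin.sum_univ_two] using hab⟩, ?_⟩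
  simp [Fin.sum_univ_two]

theorem IsLinearGameValueOn.mul_id {S : Set ℝ} {f : ℝ → ℝ} {m R : ℝ}
    (hf : IsLinearGameValueOn S f) (hfm : ∀ z ∈ S, |f z| ≤ m) (hR : ∀ z ∈ S, |z| ≤ R) :
    IsLinearGameValueOn S fun z => f z * z := by
  obtain ⟨A, B, _, _, _, _, G, hG, hGf⟩ := hf
  refine ⟨A × Fin 2, B × Fin 2, inferInstance, inferInstance, inferInstance, inferInstance,
    fun p q => ![-m, m] p.2 • X + ![-R, R] q.2 • G p.1 q.1 - C (![-m, m] p.2 * ![-R, R] q.2),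
    fun p q => ?_, fun z hz => ?_⟩
  · refine (degree_sub_le _ _).trans (max_le ((degree_add_le _ _).trans (max_le ?_ ?_)) ?_)
    · exact (degree_smul_le _ _).trans degree_X_le
    · exact (degree_smul_le _ _).trans (hG _ _)
    · exact degree_C_le.trans zero_le_one
  · simpa only [eval_sub, eval_add, eval_smul, eval_X, eval_C, smul_eq_mul] using
      (hGf z hz).scale (exists_mem_stdSimplex_sum_mul_eq (hfm z hz))
        (exists_mem_stdSimplex_sum_mul_eq (hR z hz))

theorem isLinearGameValueOn_pow {S : Set ℝ} (hS : Bornology.IsBounded S) (k : ℕ) :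
    IsLinearGameValueOn S (· ^ k) := by
  obtain ⟨R, hR⟩ := hS.exists_norm_le
  simp only [Real.norm_eq_abs] at hR
  induction k with
  | zero => simpa only [pow_zero] using isLinearGameValueOn_const S 1
  | succ k ih =>
    have hpow : ∀ z ∈ S, |z ^ k| ≤ R ^ k := fun z hz => by
      rw [abs_pow]
      exact pow_le_pow_left₀ (abs_nonneg z) (hR z hz) k
    simpa only [← pow_succ] using ih.mul_id hpow hR

theorem monomial_is_linear_game_value_on_interval_general (α β : ℝ) (k : ℕ) :
    ∃ (A B : Type) (iA : Fintype A) (iB : Fintype B), Nonempty A ∧ Nonempty B ∧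
      ∃ G : A → B → Polynomial ℝ, (∀ a b, (G a b).degree ≤ 1) ∧
        ∀ z ∈ Set.Icc α β, (@matrixValue A B iA iB fun a b => (G a b).eval z) = z ^ k := by
  obtain ⟨A, B, iA, iB, hA, hB, G, hG, hGz⟩ := isLinearGameValueOn_pow (Metric.isBounded_Icc α β) k
  exact ⟨A, B, iA, iB, hA, hB, G, hG,
    fun z hz => matrixValue_eq_of_hasEqualizingStrategies (hGz z hz)⟩

/-- For every compact interval `I = [α, β]` with `α < β` and every `k ∈ ℕ`, there is a
linear game whose value function agrees with `z ↦ z ^ k` on `I`. -/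
theorem monomial_is_linear_game_value_on_interval (α β : ℝ) (hαβ : α < β) (k : ℕ) :
    ∃ (A B : Type) (iA : Fintype A) (iB : Fintype B), Nonempty A ∧ Nonempty B ∧
      ∃ G : A → B → Polynomial ℝ, (∀ a b, (G a b).degree ≤ 1) ∧
        ∀ z ∈ Set.Icc α β, (@matrixValue A B iA iB fun a b => (G a b).eval z) = z ^ k :=
  monomial_is_linear_game_value_on_interval_general α β k
end
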